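/- arXiv:1606.01559 — 10 statements merged into one kernel-verified Lean document; each statement's English description precedes it below -/
import Mathlib

section
/- For any two disjoint finite sets X₁, X₂ of points in ℝ^d and any r ≥ 1, the tolerance satisfies t(X₁ ∪ X₂, r) ≥ t(X₁, r) + t(X₂, r). -/
/-- `hasTol X r t` : there is a partition of `X` into `r` disjoint parts
`A₁, …, A_r` such that for every `Y ⊆ X` with `|Y| ≤ t`, the convex hulls of the
parts with `Y` deleted have a common point. The tolerance `t(X,r)` is the
maximum such `t`; this predicate expresses `t(X,r) ≥ t`. -/
def hasTol {d : ℕ} (X : Finset (Fin d → ℝ)) (r t : ℕ) : Prop :=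
  ∃ A : Fin r → Finset (Fin d → ℝ),
    (∀ i j, i ≠ j → Disjoint (A i) (A j)) ∧
    (X = Finset.univ.biUnion A) ∧
    ∀ Y : Finset (Fin d → ℝ), Y ⊆ X → Y.card ≤ t →
      (⋂ i : Fin r, convexHull ℝ ((A i \ Y : Finset (Fin d → ℝ)) : Set (Fin d → ℝ))).Nonempty

/-- Superadditivity of tolerance under disjoint union:
`t(X₁ ∪ X₂, r) ≥ t(X₁, r) + t(X₂, r)`. -/
theorem tolerance_superadditive {d r : ℕ} (hr : 1 ≤ r) {t₁ t₂ : ℕ}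
    (X₁ X₂ : Finset (Fin d → ℝ)) (hdisj : Disjoint X₁ X₂)
    (h₁ : hasTol X₁ r t₁) (h₂ : hasTol X₂ r t₂) :
    hasTol (X₁ ∪ X₂) r (t₁ + t₂) := by
  obtain ⟨A, hAd, hAu, hA⟩ := h₁
  obtain ⟨B, hBd, hBu, hB⟩ := h₂
  have hA1 : ∀ k, A k ⊆ X₁ := fun k =>
    hAu ▸ Finset.subset_biUnion_of_mem A (Finset.mem_univ k)
  have hB1 : ∀ k, B k ⊆ X₂ := fun k =>
    hBu ▸ Finset.subset_biUnion_of_mem B (Finset.mem_univ k)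
  refine ⟨fun i => A i ∪ B i, ?_, ?_, ?_⟩
  · intro i j hij
    simp only [Finset.disjoint_union_left, Finset.disjoint_union_right]
    exact ⟨⟨hAd i j hij, (hdisj.mono (hA1 j) (hB1 i)).symm⟩,
      ⟨hdisj.mono (hA1 i) (hB1 j), hBd i j hij⟩⟩
  · ext x
    simp only [Finset.mem_union, hAu, hBu, Finset.mem_biUnion, Finset.mem_univ, true_and]
    constructor
    · rintro (⟨i, hi⟩ | ⟨i, hi⟩) <;> exact ⟨i, by simp [hi]⟩
    · rintro ⟨i, hi | hi⟩
      · exact Or.inl ⟨i, hi⟩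
      · exact Or.inr ⟨i, hi⟩
  · intro Y hYsub hYcard
    set Y₁ := Y ∩ X₁ with hY₁
    set Y₂ := Y ∩ X₂ with hY₂
    have hd12 : Disjoint Y₁ Y₂ :=
      hdisj.mono Finset.inter_subset_right Finset.inter_subset_right
    have hcard : Y₁.card + Y₂.card ≤ Y.card := by
      rw [← Finset.card_union_of_disjoint hd12]
      apply Finset.card_le_card
      exact Finset.union_subset Finset.inter_subset_left Finset.inter_subset_left
    have hcases : Y₁.card ≤ t₁ ∨ Y₂.card ≤ t₂ := by omega
    rcases hcases with h | h
    · obtain ⟨p, hp⟩ := hA Y₁ Finset.inter_subset_right h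
      refine ⟨p, ?_⟩
      rw [Set.mem_iInter] at hp ⊢
      intro i
      refine convexHull_mono ?_ (hp i)
      rw [Finset.coe_subset]
      intro x hx
      simp only [Finset.mem_sdiff, Finset.mem_union] at hx ⊢
      obtain ⟨hxA, hxY⟩ := hx
      refine ⟨Or.inl hxA, fun hxY' => hxY ?_⟩
      exact Finset.mem_inter.mpr ⟨hxY', hA1 i hxA⟩
    · obtain ⟨p, hp⟩ := hB Y₂ Finset.inter_subset_right h
      refine ⟨p, ?_⟩
      rw [Set.mem_iInter] at hp ⊢
      intro i
      refine convexHull_mono ?_ (hp i)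
      rw [Finset.coe_subset]
      intro x hx
      simp only [Finset.mem_sdiff, Finset.mem_union] at hx ⊢
      obtain ⟨hxB, hxY⟩ := hx
      refine ⟨Or.inr hxB, fun hxY' => hxY ?_⟩
      exact Finset.mem_inter.mpr ⟨hxY', hB1 i hxB⟩
end

section
/- Let x₁ < x₂ < … < x_n be real numbers and let r ≥ 1. Define the alternating partition A₁, …, A_r of {x₁, …, x_n} by A_i = {x_j : j ≡ i (mod r)}. If n ≥ 2r − 1, then ⋂_{i=1}^r conv(A_i) ≠ ∅. -/
/-- Alternating partition lemma on the line: if `x₁ < … < x_n` are reals with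
`n ≥ 2r − 1` and `A_i = {x_j : j ≡ i (mod r)}` is the alternating partition,
then `⋂ i conv(A_i) ≠ ∅`. -/
theorem alternating_partition_line (n r : ℕ) (hr : 1 ≤ r) (hn : 2 * r - 1 ≤ n)
    (x : Fin n → ℝ) (hx : StrictMono x) :
    (⋂ i : Fin r, convexHull ℝ
      (((Finset.univ.filter (fun j : Fin n => j.val % r = i.val)).image x : Finset ℝ) :
        Set ℝ)).Nonempty := by
  have hrn : r - 1 < n := by omega
  set p : ℝ := x ⟨r - 1, hrn⟩ with hp
  refine ⟨p, ?_⟩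
  rw [Set.mem_iInter]
  intro i
  have hi : i.val < r := i.isLt
  by_cases hcase : i.val = r - 1
  · apply subset_convexHull
    simp only [Finset.coe_image, Finset.coe_filter, Set.mem_image]
    exact ⟨⟨r - 1, hrn⟩, by simp [hcase, Nat.mod_eq_of_lt (by omega : r - 1 < r)], rfl⟩
  · have hi' : i.val < r - 1 := by omega
    have h1 : i.val < n := by omega
    have h2 : i.val + r < n := by omega
    have ha : x ⟨i.val, h1⟩ ≤ p := hx.monotone (by simp [Fin.le_def]; omega)
    have hb : p ≤ x ⟨i.val + r, h2⟩ := hx.monotone (by simp [Fin.le_def]; omega)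
    have hmem : ∀ k (hk : k < n), k % r = i.val →
        x ⟨k, hk⟩ ∈ ((Finset.univ.filter (fun j : Fin n => j.val % r = i.val)).image x :
          Finset ℝ) := by
      intro k hk hkr
      exact Finset.mem_image.2 ⟨⟨k, hk⟩, Finset.mem_filter.2 ⟨Finset.mem_univ _, hkr⟩, rfl⟩
    have hA : x ⟨i.val, h1⟩ ∈ convexHull ℝ
        (((Finset.univ.filter (fun j : Fin n => j.val % r = i.val)).image x : Finset ℝ) :
          Set ℝ) :=
      subset_convexHull ℝ _ (hmem _ h1 (Nat.mod_eq_of_lt hi))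
    have hB : x ⟨i.val + r, h2⟩ ∈ convexHull ℝ
        (((Finset.univ.filter (fun j : Fin n => j.val % r = i.val)).image x : Finset ℝ) :
          Set ℝ) :=
      subset_convexHull ℝ _ (hmem _ h2 (by simp [Nat.add_mod, Nat.mod_eq_of_lt hi]))
    have := (convex_convexHull ℝ _).segment_subset hA hB
    apply this
    rw [segment_eq_Icc (le_trans ha hb)]
    exact ⟨ha, hb⟩
end

section
/- For d = 1 and every r ≥ 1, the constant c(1, r) in the alternating partition lemma equals 2r − 1: there exist real numbers x₁ < … < x_{2r−2} such that the alternating partition A₁, …, A_r of {x₁, …, x_{2r−2}} satisfies ⋂_{i=1}^r conv(A_i) = ∅. -/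
lemma aux_mod (r j k : ℕ) (h2 : 2 ≤ r) (hk : r - 2 ≤ k) (hk' : k < r)
    (hj : j < 2 * r - 2) : j % r = k ↔ j = k := by
  rcases lt_or_ge j r with h | h
  · rw [Nat.mod_eq_of_lt h]
  · rw [Nat.mod_eq_sub_mod h, Nat.mod_eq_of_lt (by omega)]
    omega

/-- Sharpness of the alternating partition lemma in dimension 1: `c(1,r) = 2r−1`.
There are `2r−2` increasing reals whose alternating partition into `r` parts has
empty intersection of convex hulls. -/
theorem alternating_partition_line_sharp (r : ℕ) (hr : 1 ≤ r) :
    ∃ x : Fin (2 * r - 2) → ℝ, StrictMono x ∧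
      (⋂ i : Fin r, convexHull ℝ
        (((Finset.univ.filter (fun j : Fin (2 * r - 2) => j.val % r = i.val)).image x :
          Finset ℝ) : Set ℝ)) = ∅ := by
  rcases eq_or_lt_of_le hr with h1 | h2
  · -- r = 1 : no points
    refine ⟨fun j => 0, fun a => ?_, ?_⟩
    · exact absurd a.2 (by omega)
    · have : Finset.univ (α := Fin (2 * r - 2)) = ∅ := by
        apply Finset.eq_empty_of_forall_notMem
        intro j; exact absurd j.2 (by omega)
      ext y
      simp only [Set.mem_iInter, Set.mem_empty_iff_false, iff_false]
      intro hy
      simpa [this] using hy ⟨0, hr⟩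
  · -- r ≥ 2
    have h2r : 2 ≤ r := h2
    refine ⟨fun j => (j.val : ℝ), ?_, ?_⟩
    · intro a b hab
      show (a.val : ℝ) < b.val
      exact_mod_cast Fin.lt_iff_val_lt_val.mp hab
    · have key : ∀ k : ℕ, r - 2 ≤ k → k < r →
        ((Finset.univ.filter (fun j : Fin (2 * r - 2) => j.val % r = k)).image
          (fun j : Fin (2 * r - 2) => (j.val : ℝ))) = {(k : ℝ)} := by
        intro k hk hk'
        have hklt : k < 2 * r - 2 := by omega
        have : (Finset.univ.filter (fun j : Fin (2 * r - 2) => j.val % r = k))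
            = {⟨k, hklt⟩} := by
          ext j
          simp only [Finset.mem_filter, Finset.mem_univ, true_and, Finset.mem_singleton]
          rw [aux_mod r j.val k h2r hk hk' j.2]
          constructor
          · intro h; exact Fin.ext h
          · intro h; rw [h]
        rw [this, Finset.image_singleton]
      ext y
      simp only [Set.mem_iInter, Set.mem_empty_iff_false, iff_false]
      intro hy
      have hA := hy ⟨r - 2, by omega⟩
      have hB := hy ⟨r - 1, by omega⟩
      rw [key (r - 2) le_rfl (by omega)] at hA
      rw [key (r - 1) (by omega) (by omega)] at hB
      simp only [Finset.coe_singleton, convexHull_singleton, Set.mem_singleton_iff] at hA hB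
      have : ((r - 2 : ℕ) : ℝ) = ((r - 1 : ℕ) : ℝ) := hA ▸ hB
      have := Nat.cast_inj (R := ℝ).mp this
      omega
end

section
/- Let X = {x₁, …, x_n} with x₁ < x₂ < … < x_n real numbers, and let A₁, …, A_r be the alternating partition A_i = {x_j : j ≡ i (mod r)}. Then for any Y ⊆ X with |Y| ≤ ⌊n/r⌋ − (2r − 1), we have ⋂_{i=1}^r conv(A_i \ Y) ≠ ∅. In particular t(X, r) ≥ ⌊n/r⌋ − (2r − 1). -/
/-- Tolerance of the alternating partition on the line: if `x₁ < … < x_n` and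
`A_i = {x_j : j ≡ i (mod r)}`, then for every `Y ⊆ X` with
`|Y| ≤ ⌊n/r⌋ − (2r − 1)` we have `⋂ i conv(A_i \ Y) ≠ ∅`;
in particular `t(X,r) ≥ ⌊n/r⌋ − (2r − 1)`. -/
theorem alternating_partition_line_tolerance (n r : ℕ) (hr : 1 ≤ r)
    (x : Fin n → ℝ) (hx : StrictMono x)
    (Y : Finset ℝ) (hY : Y ⊆ Finset.univ.image x)
    (hYcard : (Y.card : ℤ) ≤ ((n / r : ℕ) : ℤ) - ((2 * r - 1 : ℕ) : ℤ)) :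
    (⋂ i : Fin r, convexHull ℝ
      ((((Finset.univ.filter (fun j : Fin n => j.val % r = i.val)).image x \ Y) :
        Finset ℝ) : Set ℝ)).Nonempty := by
  classical
  have hinj : Function.Injective x := hx.injective
  set B := n / r with hB
  set f : ℝ → ℕ := fun y => if h : ∃ j : Fin n, x j = y then h.choose.val / r else 0 with hf
  have hfx : ∀ j : Fin n, f (x j) = j.val / r := by
    intro j
    have h : ∃ j' : Fin n, x j' = x j := ⟨j, rfl⟩
    simp only [hf, dif_pos h]
    congr 1
    exact congrArg Fin.val (hinj h.choose_spec)
  set T := Y.image f with hT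
  set U := (Finset.range B) \ T with hU
  have hcard : 2 * r - 1 + Y.card ≤ B := by
    have h1 : (0:ℤ) ≤ (Y.card : ℤ) := Int.ofNat_nonneg _
    omega
  have hTcard : T.card ≤ Y.card := Finset.card_image_le
  have hUcard : 2 * r - 1 ≤ U.card := by
    have h2 : (Finset.range B).card ≤ U.card + T.card := by
      rw [hU]; exact Finset.card_le_card_sdiff_add_card
    have h3 := Finset.card_range B
    omega
  have hUne : U.Nonempty := Finset.card_pos.1 (by omega)
  -- untouched blocks avoid Y
  have hunt : ∀ k ∈ U, ∀ (j : Fin n), j.val / r = k → x j ∉ Y := by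
    intro k hk j hjk hxY
    have h1 : f (x j) = k := by rw [hfx]; exact hjk
    have h2 : k ∈ T := Finset.mem_image.2 ⟨x j, hxY, h1⟩
    exact (Finset.mem_sdiff.1 hk).2 h2
  have hBr : B * r ≤ n := Nat.div_mul_le_self n r
  have hlt : ∀ k ∈ U, ∀ i, i < r → k * r + i < n := by
    intro k hk i hi
    have hkB : k < B := Finset.mem_range.1 (Finset.mem_sdiff.1 hk).1
    have h1 : (k + 1) * r ≤ B * r := Nat.mul_le_mul_right r hkB
    calc k * r + i < k * r + r := by omega
      _ = (k + 1) * r := by ring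
      _ ≤ B * r := h1
      _ ≤ n := hBr
  have hdiv : ∀ k i, i < r → (k * r + i) / r = k := by
    intro k i hi
    rw [add_comm, Nat.add_mul_div_right _ _ (by omega : 0 < r), Nat.div_eq_of_lt hi]; omega
  have hmod : ∀ k i, i < r → (k * r + i) % r = i := by
    intro k i hi
    rw [add_comm, Nat.add_mul_mod_self_right, Nat.mod_eq_of_lt hi]
  set k1 := U.min' hUne with hk1
  set k2 := U.max' hUne with hk2
  have hk1U : k1 ∈ U := U.min'_mem hUne
  have hk2U : k2 ∈ U := U.max'_mem hUne
  have hk12 : k1 ≤ k2 := U.min'_le _ hk2U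
  have hkey : ∀ i, i < r → k1 * r + (r - 1) ≤ k2 * r + i := by
    intro i hi
    rcases eq_or_lt_of_le hk12 with he | hlt'
    · -- if k1 = k2 then r = 1 (since |U| = 1 forces 2r-1 ≤ 1)
      have hr1 : r = 1 := by
        by_contra hne
        have h2 : 1 < U.card := by omega
        have := Finset.min'_lt_max'_of_card U h2
        omega
      rw [he, hr1]
      omega
    · have h1 : k1 * r + (r - 1) < (k1 + 1) * r := by
        have : (k1 + 1) * r = k1 * r + r := by ring
        omega
      have h2 : (k1 + 1) * r ≤ k2 * r := Nat.mul_le_mul_right r hlt'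
      omega
  set p := x ⟨k1 * r + (r - 1), hlt k1 hk1U _ (by omega)⟩ with hp
  refine ⟨p, Set.mem_iInter.2 fun i => ?_⟩
  have hi : (i : ℕ) < r := i.isLt
  set ja : Fin n := ⟨k1 * r + i.val, hlt k1 hk1U _ hi⟩ with hja
  set jb : Fin n := ⟨k2 * r + i.val, hlt k2 hk2U _ hi⟩ with hjb
  set S := ((Finset.univ.filter (fun j : Fin n => j.val % r = i.val)).image x \ Y) with hS
  have hmem : ∀ (k : ℕ) (hk : k ∈ U) (j : Fin n), j.val = k * r + i.val → x j ∈ S := by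
    intro k hk j hj
    refine Finset.mem_sdiff.2 ⟨Finset.mem_image.2 ⟨j, Finset.mem_filter.2 ⟨Finset.mem_univ _, by
      rw [hj]; exact hmod k i.val hi⟩, rfl⟩, hunt k hk j (by rw [hj]; exact hdiv k i.val hi)⟩
  have ha : x ja ∈ S := hmem k1 hk1U ja rfl
  have hb : x jb ∈ S := hmem k2 hk2U jb rfl
  have hap : x ja ≤ p := hx.monotone (by simp [hja]; omega)
  have hpb : p ≤ x jb := hx.monotone (by simp [hjb]; exact hkey i.val hi)
  have hseg : segment ℝ (x ja) (x jb) ⊆ convexHull ℝ (S : Set ℝ) :=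
    segment_subset_convexHull (Finset.mem_coe.2 ha) (Finset.mem_coe.2 hb)
  apply hseg
  rw [segment_eq_Icc (le_trans hap hpb)]
  exact ⟨hap, hpb⟩
end

section
/- Let X be a finite set of n points in ℝ^d (d ≥ 1) and let A₁, …, A_r be any partition of X into r ≥ 2 nonempty parts. Suppose t ≥ 0 is such that for every Y ⊆ X with |Y| ≤ t, ⋂_{i=1}^r conv(A_i \ Y) ≠ ∅. Then for every pair i ≠ j with |A_i ∪ A_j| ≥ d + 2, we have |A_i| + |A_j| > 2t + d. -/
/-- `X` is in general position: every `d+1` of its points are affinely independent. -/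
def GenPos {d : ℕ} (X : Finset (Fin d → ℝ)) : Prop :=
  ∀ s : Finset (Fin d → ℝ), s ⊆ X → s.card = d + 1 →
    AffineIndependent ℝ (fun p : (s : Set (Fin d → ℝ)) => (p : Fin d → ℝ))

open Finset

/-- Sum of affine maps into ℝ, applied pointwise. -/
lemma affineMap_sum_apply {E : Type*} [AddCommGroup E] [Module ℝ E] {ι : Type*}
    (s : Finset ι) (f : ι → (E →ᵃ[ℝ] ℝ)) (x : E) :
    (∑ k ∈ s, f k) x = ∑ k ∈ s, f k x := by
  induction s using Finset.cons_induction with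
  | empty => simp
  | cons a s ha ih => simp [Finset.sum_cons, AffineMap.coe_add, Pi.add_apply, ih]

/-- Separation lemma: given an affine functional vanishing on `S`, nonzero off `S`,
and a perturbation direction `g` with prescribed signs on `S`, the convex hulls of
`Ai \ Y` and `Aj \ Y` cannot meet, where `Y` contains the "bad" points. -/
lemma sep_lemma {E : Type*} [AddCommGroup E] [Module ℝ E] [DecidableEq E]
    (Ai Aj S Y : Finset E)
    (f g : E →ᵃ[ℝ] ℝ)
    (hfS : ∀ p ∈ S, f p = 0)
    (hgi : ∀ p ∈ S, p ∈ Ai → g p = -1)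
    (hgj : ∀ p ∈ S, p ∈ Aj → g p = 1)
    (hfne : ∀ p ∈ (Ai ∪ Aj) \ S, f p ≠ 0)
    (hY : ∀ p ∈ (Ai ∪ Aj) \ S, ((p ∈ Ai ∧ 0 < f p) ∨ (p ∈ Aj ∧ f p < 0)) → p ∈ Y)
    {z : E} (hzi : z ∈ convexHull ℝ ((Ai \ Y : Finset E) : Set E))
    (hzj : z ∈ convexHull ℝ ((Aj \ Y : Finset E) : Set E)) : False := by
  classical
  set F := (Ai ∪ Aj) \ S with hF
  -- choose ε
  obtain ⟨ε, hε0, hε⟩ : ∃ ε : ℝ, 0 < ε ∧ ∀ p ∈ F, ε * (|g p| + 1) ≤ |f p| := by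
    by_cases hFne : F.Nonempty
    · refine ⟨F.inf' hFne (fun p => |f p| / (|g p| + 1)), ?_, ?_⟩
      · rw [Finset.lt_inf'_iff]
        intro p hp
        have h1 : (0:ℝ) < |g p| + 1 := by positivity
        exact div_pos (abs_pos.2 (hfne p hp)) h1
      · intro p hp
        have h1 : (0:ℝ) < |g p| + 1 := by positivity
        have h2 : F.inf' hFne (fun p => |f p| / (|g p| + 1)) ≤ |f p| / (|g p| + 1) :=
          Finset.inf'_le _ hp
        calc F.inf' hFne (fun p => |f p| / (|g p| + 1)) * (|g p| + 1)
            ≤ (|f p| / (|g p| + 1)) * (|g p| + 1) := by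
              exact mul_le_mul_of_nonneg_right h2 h1.le
          _ = |f p| := div_mul_cancel₀ _ h1.ne'
    · exact ⟨1, one_pos, fun p hp => absurd ⟨p, hp⟩ hFne⟩
  set ℓ : E →ᵃ[ℝ] ℝ := f + ε • g with hℓ
  have hℓ_apply : ∀ x, ℓ x = f x + ε * g x := by
    intro x; simp [hℓ, AffineMap.coe_add, AffineMap.coe_smul, Pi.add_apply, Pi.smul_apply, smul_eq_mul]
  -- key: ℓ < 0 on Ai \ Y
  have key1 : ∀ p ∈ Ai \ Y, ℓ p < 0 := by
    intro p hp
    rw [Finset.mem_sdiff] at hp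
    obtain ⟨hpi, hpY⟩ := hp
    by_cases hpS : p ∈ S
    · rw [hℓ_apply, hfS p hpS, hgi p hpS hpi]; linarith
    · have hpF : p ∈ F := by
        rw [hF, Finset.mem_sdiff]; exact ⟨Finset.mem_union_left _ hpi, hpS⟩
      have h1 : f p ≠ 0 := hfne p hpF
      have h2 : ¬ (0 < f p) := fun h => hpY (hY p hpF (Or.inl ⟨hpi, h⟩))
      have h3 : f p < 0 := lt_of_le_of_ne (not_lt.1 h2) h1
      have h4 : ε * g p ≤ ε * |g p| := mul_le_mul_of_nonneg_left (le_abs_self _) hε0.le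
      have h5 := hε p hpF
      have h6 : |f p| = -f p := abs_of_neg h3
      rw [hℓ_apply]; nlinarith
  have key2 : ∀ p ∈ Aj \ Y, 0 < ℓ p := by
    intro p hp
    rw [Finset.mem_sdiff] at hp
    obtain ⟨hpj, hpY⟩ := hp
    by_cases hpS : p ∈ S
    · rw [hℓ_apply, hfS p hpS, hgj p hpS hpj]; linarith
    · have hpF : p ∈ F := by
        rw [hF, Finset.mem_sdiff]; exact ⟨Finset.mem_union_right _ hpj, hpS⟩
      have h1 : f p ≠ 0 := hfne p hpF
      have h2 : ¬ (f p < 0) := fun h => hpY (hY p hpF (Or.inr ⟨hpj, h⟩))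
      have h3 : 0 < f p := lt_of_le_of_ne (not_lt.1 h2) (Ne.symm h1)
      have h4 : ε * (-g p) ≤ ε * |g p| := mul_le_mul_of_nonneg_left (neg_le_abs _) hε0.le
      have h5 := hε p hpF
      have h6 : |f p| = f p := abs_of_pos h3
      rw [hℓ_apply]; nlinarith
  -- convex hulls
  have c1 : (↑(Ai \ Y) : Set E) ⊆ ℓ ⁻¹' (Set.Iio 0) := fun p hp =>
    key1 p (Finset.mem_coe.1 hp)
  have c2 : (↑(Aj \ Y) : Set E) ⊆ ℓ ⁻¹' (Set.Ioi 0) := fun p hp =>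
    key2 p (Finset.mem_coe.1 hp)
  have hconv1 : Convex ℝ (ℓ ⁻¹' (Set.Iio 0)) := (convex_Iio (0:ℝ)).affine_preimage ℓ
  have hconv2 : Convex ℝ (ℓ ⁻¹' (Set.Ioi 0)) := (convex_Ioi (0:ℝ)).affine_preimage ℓ
  have hz1 : ℓ z < 0 := convexHull_min c1 hconv1 hzi
  have hz2 : 0 < ℓ z := convexHull_min c2 hconv2 hzj
  linarith


set_option maxHeartbeats 1000000 in
/-- The pairwise inequality in the proof of Proposition 3.5: if a partition of a
set in general position in `ℝ^d` tolerates `t` deletions, then any two parts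
`A_i, A_j` with `|A_i ∪ A_j| ≥ d + 2` satisfy `|A_i| + |A_j| > 2t + d`. -/
theorem pairwise_tolerance_bound {d r t n : ℕ} (hd : 1 ≤ d) (hr : 2 ≤ r)
    (X : Finset (Fin d → ℝ)) (hcard : X.card = n) (hgp : GenPos X)
    (A : Fin r → Finset (Fin d → ℝ))
    (hne : ∀ i, (A i).Nonempty)
    (hdisj : ∀ i j, i ≠ j → Disjoint (A i) (A j))
    (hcover : X = Finset.univ.biUnion A)
    (htol : ∀ Y : Finset (Fin d → ℝ), Y ⊆ X → Y.card ≤ t →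
      (⋂ i : Fin r, convexHull ℝ ((A i \ Y : Finset (Fin d → ℝ)) : Set (Fin d → ℝ))).Nonempty)
    (i j : Fin r) (hij : i ≠ j) (hbig : d + 2 ≤ (A i ∪ A j).card) :
    2 * t + d < (A i).card + (A j).card := by
  classical
  by_contra hcon
  push_neg at hcon
  have hijdisj : Disjoint (A i) (A j) := hdisj i j hij
  have hsub : A i ∪ A j ⊆ X := by
    intro p hp
    rw [hcover, Finset.mem_biUnion]
    rcases Finset.mem_union.1 hp with h | h
    · exact ⟨i, Finset.mem_univ _, h⟩
    · exact ⟨j, Finset.mem_univ _, h⟩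
  -- choose T of size d+1
  obtain ⟨T, hTsub, hTcard⟩ := Finset.exists_subset_card_eq (show d + 1 ≤ (A i ∪ A j).card by omega)
  have hTX : T ⊆ X := hTsub.trans hsub
  have hTind : AffineIndependent ℝ (fun p : ((T : Set (Fin d → ℝ))) => (p : (Fin d → ℝ))) := hgp T hTX hTcard
  have hcardT : Fintype.card ((T : Set (Fin d → ℝ))) = d + 1 := by
    simp [hTcard]
  have htop : affineSpan ℝ (Set.range (fun p : ((T : Set (Fin d → ℝ))) => (p : (Fin d → ℝ)))) = ⊤ := by
    rw [hTind.affineSpan_eq_top_iff_card_eq_finrank_add_one, hcardT,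
      Module.finrank_fin_fun]
  set b : AffineBasis ((T : Set (Fin d → ℝ))) ℝ (Fin d → ℝ) := ⟨fun p => (p : (Fin d → ℝ)), hTind, htop⟩ with hb
  have hbapply : ∀ k : ((T : Set (Fin d → ℝ))), b k = (k : (Fin d → ℝ)) := fun k => rfl
  -- choose q and S
  have hTne : T.Nonempty := Finset.card_pos.1 (by omega)
  obtain ⟨q, hq⟩ := hTne
  have hqmem : q ∈ (T : Set (Fin d → ℝ)) := Finset.mem_coe.2 hq
  set S : Finset (Fin d → ℝ) := T.erase q with hS
  have hScard : S.card = d := by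
    rw [hS, Finset.card_erase_of_mem hq, hTcard]
    omega
  have hSsubT : S ⊆ T := Finset.erase_subset _ _
  set f0 : (Fin d → ℝ) →ᵃ[ℝ] ℝ := b.coord ⟨q, hqmem⟩ with hf0
  have hf0q : f0 q = 1 := by
    have := b.coord_apply_eq ⟨q, hqmem⟩
    rwa [hbapply] at this
  have hf0S : ∀ p ∈ S, f0 p = 0 := by
    intro p hp
    have hpT : p ∈ T := hSsubT hp
    have hpq : p ≠ q := Finset.ne_of_mem_erase hp
    have hne' : (⟨q, hqmem⟩ : ((T : Set (Fin d → ℝ)))) ≠ ⟨p, Finset.mem_coe.2 hpT⟩ := by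
      simp [Subtype.ext_iff, hpq.symm]
    have := b.coord_apply_ne hne'
    rwa [hbapply] at this
  -- f0 nonzero off S
  have hf0ne : ∀ p ∈ (A i ∪ A j) \ S, f0 p ≠ 0 := by
    intro p hp h0
    rw [Finset.mem_sdiff] at hp
    obtain ⟨hpU, hpS⟩ := hp
    by_cases hpq : p = q
    · rw [hpq, hf0q] at h0; norm_num at h0
    have hpT : p ∉ T := by
      intro hpT
      exact hpS (Finset.mem_erase.2 ⟨hpq, hpT⟩)
    have hpnotS : p ∉ S := hpS
    set U : Finset (Fin d → ℝ) := insert p S with hU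
    have hUcard : U.card = d + 1 := by
      rw [hU, Finset.card_insert_of_notMem hpnotS, hScard]
    have hUX : U ⊆ X := by
      intro x hx
      rcases Finset.mem_insert.1 hx with rfl | hx
      · exact hsub hpU
      · exact hTX (hSsubT hx)
    have hUind : AffineIndependent ℝ (fun x : ((U : Set (Fin d → ℝ))) => (x : (Fin d → ℝ))) := hgp U hUX hUcard
    -- all points of U are in ker f0
    have hUzero : ∀ x ∈ (U : Set (Fin d → ℝ)), f0 x = 0 := by
      intro x hx
      rcases Finset.mem_insert.1 (Finset.mem_coe.1 hx) with rfl | hx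
      · exact h0
      · exact hf0S x hx
    have hvs : vectorSpan ℝ ((U : Set (Fin d → ℝ))) ≤ LinearMap.ker f0.linear := by
      rw [vectorSpan_def, Submodule.span_le]
      rintro v ⟨x, hx, y, hy, rfl⟩
      rw [SetLike.mem_coe, LinearMap.mem_ker, AffineMap.linearMap_vsub,
        hUzero x hx, hUzero y hy]
      simp
    have hfrU : Module.finrank ℝ (vectorSpan ℝ ((U : Set (Fin d → ℝ)))) = d := by
      have hcardU : Fintype.card ((U : Set (Fin d → ℝ))) = d + 1 := by simp [hUcard]
      have := hUind.finrank_vectorSpan (n := d) hcardU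
      rwa [Subtype.range_coe] at this
    -- f0.linear nonzero
    obtain ⟨s0, hs0⟩ : S.Nonempty := Finset.card_pos.1 (by omega)
    have hlin : f0.linear (q - s0) = 1 := by
      have := f0.linearMap_vsub q s0
      rw [hf0q, hf0S s0 hs0] at this
      simpa [vsub_eq_sub] using this
    have hrange : 0 < Module.finrank ℝ (LinearMap.range f0.linear) := by
      rw [Module.finrank_pos_iff_exists_ne_zero]
      refine ⟨⟨1, ⟨q - s0, hlin⟩⟩, ?_⟩
      intro h
      exact one_ne_zero (congrArg Subtype.val h)
    have hker : Module.finrank ℝ (LinearMap.ker f0.linear) + 1 ≤ d := by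
      have := LinearMap.finrank_range_add_finrank_ker f0.linear
      rw [Module.finrank_fin_fun] at this
      omega
    have := Submodule.finrank_mono hvs
    omega
  -- define g
  set g : (Fin d → ℝ) →ᵃ[ℝ] ℝ :=
    ∑ k : ((T : Set (Fin d → ℝ))), (if (k : (Fin d → ℝ)) ∈ A i then (-1:ℝ) else 1) • b.coord k with hg
  have hgval : ∀ p (hp : p ∈ T), g p = if p ∈ A i then (-1:ℝ) else 1 := by
    intro p hp
    have hpmem : p ∈ (T : Set (Fin d → ℝ)) := Finset.mem_coe.2 hp
    rw [hg, affineMap_sum_apply]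
    rw [Finset.sum_eq_single (⟨p, hpmem⟩ : ((T : Set (Fin d → ℝ))))]
    · have h1 := b.coord_apply_eq ⟨p, hpmem⟩
      rw [hbapply] at h1
      by_cases hpi : p ∈ A i <;>
        simp only [hpi, if_true, if_false, AffineMap.coe_smul, Pi.smul_apply,
          smul_eq_mul, h1] <;> norm_num
    · intro k _ hk
      have h1 := AffineBasis.coord_apply_ne (b := b) hk
      rw [hbapply] at h1
      by_cases hki : (k : Fin d → ℝ) ∈ A i <;>
        simp only [hki, if_true, if_false, AffineMap.coe_smul, Pi.smul_apply,
          smul_eq_mul, h1] <;> norm_num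
    · intro h; exact absurd (Finset.mem_univ _) h
  have hgi : ∀ p ∈ S, p ∈ A i → g p = -1 := by
    intro p hp hpi
    rw [hgval p (hSsubT hp), if_pos hpi]
  have hgj : ∀ p ∈ S, p ∈ A j → g p = 1 := by
    intro p hp hpj
    have hpi : p ∉ A i := fun h => (Finset.disjoint_left.1 hijdisj h) hpj
    rw [hgval p (hSsubT hp), if_neg hpi]
  -- counting
  set F : Finset (Fin d → ℝ) := (A i ∪ A j) \ S with hF
  have hSU : S ⊆ A i ∪ A j := hSsubT.trans hTsub
  have hFcard : F.card ≤ 2 * t := by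
    rw [hF, Finset.card_sdiff_of_subset hSU, hScard, Finset.card_union_of_disjoint hijdisj]
    have := Finset.card_union_of_disjoint hijdisj
    omega
  set P : Finset (Fin d → ℝ) := F.filter (fun p => (p ∈ A i ∧ 0 < f0 p) ∨ (p ∈ A j ∧ f0 p < 0)) with hP
  set N : Finset (Fin d → ℝ) := F.filter (fun p => (p ∈ A i ∧ f0 p < 0) ∨ (p ∈ A j ∧ 0 < f0 p)) with hN
  have hPN : Disjoint P N := by
    rw [Finset.disjoint_left]
    intro p hp hn
    rw [hP, Finset.mem_filter] at hp
    rw [hN, Finset.mem_filter] at hn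
    rcases hp.2 with ⟨hpi, h1⟩ | ⟨hpj, h1⟩ <;> rcases hn.2 with ⟨hpi', h2⟩ | ⟨hpj', h2⟩
    · linarith
    · exact (Finset.disjoint_left.1 hijdisj hpi) hpj'
    · exact (Finset.disjoint_left.1 hijdisj hpi') hpj
    · linarith
  have hPNcard : P.card + N.card ≤ 2 * t := by
    have h1 : P ∪ N ⊆ F := by
      intro p hp
      rcases Finset.mem_union.1 hp with h | h
      · exact Finset.filter_subset _ _ h
      · exact Finset.filter_subset _ _ h
    have := Finset.card_union_of_disjoint hPN
    have := Finset.card_le_card h1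
    omega
  have hmin : P.card ≤ t ∨ N.card ≤ t := by omega
  have hFX : F ⊆ X := (Finset.sdiff_subset).trans hsub
  rcases hmin with hPt | hNt
  · obtain ⟨z, hz⟩ := htol P ((Finset.filter_subset _ _).trans hFX) hPt
    rw [Set.mem_iInter] at hz
    refine sep_lemma (A i) (A j) S P f0 g hf0S hgi hgj hf0ne ?_ (hz i) (hz j)
    intro p hp hcond
    rw [hP, Finset.mem_filter]
    exact ⟨hp, hcond⟩
  · obtain ⟨z, hz⟩ := htol N ((Finset.filter_subset _ _).trans hFX) hNt
    rw [Set.mem_iInter] at hz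
    have hf0S' : ∀ p ∈ S, (-f0) p = 0 := fun p hp => by
      simp [AffineMap.coe_neg, Pi.neg_apply, hf0S p hp]
    refine sep_lemma (A i) (A j) S N (-f0) g hf0S' hgi hgj ?_ ?_ (hz i) (hz j)
    · intro p hp
      simp only [AffineMap.coe_neg, Pi.neg_apply, ne_eq, neg_eq_zero]
      exact hf0ne p hp
    · intro p hp hcond
      rw [hN, Finset.mem_filter]
      refine ⟨hp, ?_⟩
      rcases hcond with ⟨h1, h2⟩ | ⟨h1, h2⟩
      · simp only [AffineMap.coe_neg, Pi.neg_apply] at h2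
        exact Or.inl ⟨h1, by linarith⟩
      · simp only [AffineMap.coe_neg, Pi.neg_apply] at h2
        exact Or.inr ⟨h1, by linarith⟩
end

section
/- Let X be a set of n points in general position in ℝ^d with n ≥ r(d+2), and suppose t ≥ 0 is such that some partition A₁, …, A_r of X satisfies ⋂_{i=1}^r conv(A_i \ Y) ≠ ∅ for all Y ⊆ X with |Y| ≤ t. Then ⌊n/r⌋ ≥ t + ⌊d/2⌋. Consequently T(n, d, r) ≤ ⌊n/r⌋ − ⌊d/2⌋. -/
open Finset

lemma card_filter_lt_add_card_filter_gt_add_card_filter_eq {α β : Type*} [LinearOrder β]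
    (S : Finset α) (g : α → β) (c : β) :
    (S.filter (g · < c)).card + (S.filter (c < g ·)).card + (S.filter (g · = c)).card =
      S.card := by
  classical
  rw [← card_union_of_disjoint (disjoint_filter.2 fun _ _ h h' => lt_asymm h h'), ← filter_or,
    filter_congr fun x _ => (ne_iff_lt_or_gt (a := g x) (b := c)).symm, add_comm]
  exact card_filter_add_card_filter_not _

section Convex

variable {E : Type*} [AddCommGroup E] [Module ℝ E]

lemma mem_convexHull_filter_of_le {T : Finset E} {φ : E →ₗ[ℝ] ℝ} {c : ℝ}
    (hT : ∀ x ∈ T, φ x ≤ c) {p : E} (hp : p ∈ convexHull ℝ (T : Set E)) (hpc : c ≤ φ p) :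
    p ∈ convexHull ℝ (T.filter (φ · = c) : Set E) := by
  obtain ⟨w, hw0, hw1, rfl⟩ := Finset.mem_convexHull'.1 hp
  have hslack : ∑ y ∈ T, w y * (c - φ y) = c - φ (∑ y ∈ T, w y • y) := by
    simp only [mul_sub, sum_sub_distrib, ← sum_mul, hw1, one_mul, map_sum, map_smul, smul_eq_mul]
  have hzero : ∀ y ∈ T, w y * (c - φ y) = 0 :=
    (sum_eq_zero_iff_of_nonneg fun y hy => mul_nonneg (hw0 y hy) (sub_nonneg.2 (hT y hy))).1
      (le_antisymm (by linarith) (sum_nonneg fun y hy => mul_nonneg (hw0 y hy)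
        (sub_nonneg.2 (hT y hy))))
  have hsupp : ∀ y ∈ T, w y ≠ 0 → φ y = c := fun y hy hw => by
    have := (mul_eq_zero.1 (hzero y hy)).resolve_left hw
    linarith
  refine Finset.mem_convexHull'.2 ⟨w, fun y hy => hw0 y (mem_filter.1 hy).1, ?_, ?_⟩
  · rwa [sum_filter_of_ne hsupp]
  · exact sum_filter_of_ne fun y hy hne => hsupp y hy (left_ne_zero_of_smul hne)

lemma AffineIndependent.disjoint_convexHull {D B C : Finset E}
    (hD : AffineIndependent ℝ ((↑) : D → E)) (hB : B ⊆ D) (hC : C ⊆ D) (hBC : Disjoint B C) :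
    Disjoint (convexHull ℝ (B : Set E)) (convexHull ℝ (C : Set E)) := by
  classical
  rw [Set.disjoint_iff_inter_eq_empty, ← hD.convexHull_inter hB hC, ← coe_inter,
    disjoint_iff_inter_eq_empty.1 hBC, coe_empty, convexHull_empty]

lemma disjoint_convexHull_of_separating_hyperplane [DecidableEq E] {B C D : Finset E}
    (hBC : Disjoint B C) (hD : AffineIndependent ℝ ((↑) : D → E)) {φ : E →ₗ[ℝ] ℝ} {c : ℝ}
    (hB : ∀ x ∈ B, φ x ≤ c) (hC : ∀ x ∈ C, c ≤ φ x)
    (hBCD : ∀ x ∈ B ∪ C, φ x = c → x ∈ D) :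
    Disjoint (convexHull ℝ (B : Set E)) (convexHull ℝ (C : Set E)) := by
  rw [Set.disjoint_left]
  intro p hpB hpC
  have hle : φ p ≤ c := convexHull_min hB (convex_halfSpace_le φ.isLinear c) hpB
  have hge : c ≤ φ p := convexHull_min hC (convex_halfSpace_ge φ.isLinear c) hpC
  have hpB' := mem_convexHull_filter_of_le hB hpB hge
  have hpC' : p ∈ convexHull ℝ (C.filter (φ · = c) : Set E) := by
    simpa using mem_convexHull_filter_of_le (φ := -φ) (c := -c) (by simpa using hC) hpC
      (by simpa using hle)
  have hsub : ∀ S ⊆ B ∪ C, S.filter (φ · = c) ⊆ D := fun S hS x hx =>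
    hBCD x (hS (mem_filter.1 hx).1) (mem_filter.1 hx).2
  exact Set.disjoint_left.1 (hD.disjoint_convexHull (hsub B subset_union_left)
    (hsub C subset_union_right) (disjoint_filter_filter hBC)) hpB' hpC'

lemma exists_removal_disjoint_convexHull_of_hyperplane [DecidableEq E] {B C : Finset E}
    (hBC : Disjoint B C) {φ : E →ₗ[ℝ] ℝ} {c : ℝ}
    (hH : AffineIndependent ℝ ((↑) : (B ∪ C).filter (φ · = c) → E)) :
    ∃ Y ⊆ B ∪ C, 2 * Y.card + ((B ∪ C).filter (φ · = c)).card ≤ B.card + C.card ∧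
      Disjoint (convexHull ℝ (↑(B \ Y) : Set E)) (convexHull ℝ (↑(C \ Y) : Set E)) := by
  set Y₁ := B.filter (c < φ ·) ∪ C.filter (φ · < c)
  set Y₂ := B.filter (φ · < c) ∪ C.filter (c < φ ·)
  have hcount : Y₁.card + Y₂.card + ((B ∪ C).filter (φ · = c)).card = B.card + C.card := by
    have hB := card_filter_lt_add_card_filter_gt_add_card_filter_eq B φ c
    have hC := card_filter_lt_add_card_filter_gt_add_card_filter_eq C φ c
    rw [card_union_of_disjoint (disjoint_filter_filter hBC),
      card_union_of_disjoint (disjoint_filter_filter hBC), filter_union,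
      card_union_of_disjoint (disjoint_filter_filter hBC)]
    omega
  have hsep : ∀ B' C' : Finset E, B' ∪ C' ⊆ B ∪ C → Disjoint B' C' →
      (∀ x ∈ B', φ x ≤ c) → (∀ x ∈ C', c ≤ φ x) →
      Disjoint (convexHull ℝ (B' : Set E)) (convexHull ℝ (C' : Set E)) :=
    fun B' C' hsub hdisj hle hge => disjoint_convexHull_of_separating_hyperplane hdisj hH
      hle hge fun x hx hxc => mem_filter.2 ⟨hsub hx, hxc⟩
  have hsdiff : ∀ Y, B \ Y ∪ C \ Y ⊆ B ∪ C := fun Y =>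
    union_subset_union sdiff_subset sdiff_subset
  have hdisj : ∀ Y, Disjoint (B \ Y) (C \ Y) := fun Y => hBC.mono sdiff_subset sdiff_subset
  rcases le_total Y₁.card Y₂.card with h₁ | h₂
  · refine ⟨Y₁, union_subset_union (filter_subset _ _) (filter_subset _ _), by omega,
      hsep _ _ (hsdiff Y₁) (hdisj Y₁) (fun x hx => ?_) (fun x hx => ?_)⟩ <;>
    · simp only [Y₁, mem_sdiff, mem_union, mem_filter] at hx
      grind
  · refine ⟨Y₂, union_subset_union (filter_subset _ _) (filter_subset _ _), by omega,
      (hsep _ _ (union_comm (B \ Y₂) _ ▸ hsdiff Y₂) (hdisj Y₂).symm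
        (fun x hx => ?_) (fun x hx => ?_)).symm⟩ <;>
    · simp only [Y₂, mem_sdiff, mem_union, mem_filter] at hx
      grind

end Convex

lemma exists_hyperplane_through_finset {𝕜 E : Type*} [Field 𝕜] [AddCommGroup E] [Module 𝕜 E]
    [FiniteDimensional 𝕜 E] {S : Finset E} (hS : S.Nonempty)
    (hcard : S.card ≤ Module.finrank 𝕜 E) :
    ∃ φ : E →ₗ[𝕜] 𝕜, φ ≠ 0 ∧ ∃ c, ∀ x ∈ S, φ x = c := by
  have : Nonempty S := hS.to_subtype
  have hrank : Module.finrank 𝕜 (vectorSpan 𝕜 (S : Set E)) + 1 ≤ S.card := by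
    convert finrank_vectorSpan_range_add_one_le 𝕜 ((↑) : S → E) using 4 <;> simp
  have hlt : vectorSpan 𝕜 (S : Set E) < ⊤ :=
    Submodule.lt_top_of_finrank_lt_finrank (by omega)
  obtain ⟨φ, hφ, hker⟩ := (vectorSpan 𝕜 (S : Set E)).exists_le_ker_of_lt_top hlt
  obtain ⟨p, hp⟩ := hS
  refine ⟨φ, hφ, φ p, fun x hx => ?_⟩
  have := hker (vsub_mem_vectorSpan 𝕜 (mem_coe.2 hx) (mem_coe.2 hp))
  rwa [LinearMap.mem_ker, vsub_eq_sub, map_sub, sub_eq_zero] at this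

lemma card_mul_le_two_mul_sum_of_le_add {ι : Type*} [Fintype ι] (f : ι → ℕ) {m : ℕ}
    (hι : 2 ≤ Fintype.card ι) (h : ∀ i j, i ≠ j → m ≤ f i + f j) :
    Fintype.card ι * m ≤ 2 * ∑ i, f i := by
  classical
  obtain ⟨k, hk⟩ : ∃ k, Fintype.card ι = k + 2 := ⟨_, (Nat.sub_add_cancel hι).symm⟩
  have hrow : ∀ i, (k + 1) * m + 2 * f i ≤ (k + 2) * f i + ∑ j, f j := fun i => by
    have hoff : (k + 1) * m ≤ ∑ j ∈ univ.erase i, (f i + f j) := by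
      simpa [card_erase_of_mem (mem_univ i), hk] using
        card_nsmul_le_sum (univ.erase i) (fun j => f i + f j) m
          fun j hj => h i j (ne_of_mem_erase hj).symm
    have htotal : ∑ j ∈ univ.erase i, (f i + f j) + (f i + f i) = (k + 2) * f i + ∑ j, f j := by
      rw [sum_erase_add _ _ (mem_univ i), sum_add_distrib, sum_const, card_univ, hk, smul_eq_mul]
    omega
  have hsum := sum_le_sum fun i (_ : i ∈ univ) => hrow i
  rw [sum_add_distrib, sum_add_distrib, sum_const, sum_const, ← mul_sum, ← mul_sum, card_univ,
    hk, smul_eq_mul, smul_eq_mul] at hsum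
  rw [hk]
  have : (k + 1) * ((k + 2) * m) ≤ (k + 1) * (2 * ∑ i, f i) := by nlinarith
  exact Nat.le_of_mul_le_mul_left this (by omega)

namespace GenPos

variable {d : ℕ} {X : Finset (Fin d → ℝ)}

lemma mono {X' : Finset (Fin d → ℝ)} (hgp : GenPos X) (h : X' ⊆ X) : GenPos X' :=
  fun s hs => hgp s (hs.trans h)

lemma affineIndependent_of_subset (hgp : GenPos X) (hX : d + 1 ≤ X.card)
    {s : Finset (Fin d → ℝ)} (hs : s ⊆ X) (hc : s.card ≤ d + 1) :
    AffineIndependent ℝ ((↑) : s → (Fin d → ℝ)) := by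
  obtain ⟨u, hsu, huX, hu⟩ := exists_subsuperset_card_eq hs hc hX
  exact (hgp u huX hu).mono (by exact_mod_cast hsu)

lemma card_filter_eq_le (hgp : GenPos X) {φ : (Fin d → ℝ) →ₗ[ℝ] ℝ} (hφ : φ ≠ 0) (c : ℝ) :
    (X.filter (φ · = c)).card ≤ d := by
  by_contra! hbig
  obtain ⟨s, hs, hsc⟩ := exists_subset_card_eq hbig
  have hspan := (hgp s (hs.trans (filter_subset _ _)) hsc).finrank_vectorSpan
    (by simpa using hsc)
  have hker : vectorSpan ℝ (Set.range fun p : (s : Set (Fin d → ℝ)) => (p : Fin d → ℝ)) ≤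
      LinearMap.ker φ := by
    rw [vectorSpan_def, Submodule.span_le]
    rintro _ ⟨_, ⟨⟨x, hx⟩, rfl⟩, _, ⟨⟨y, hy⟩, rfl⟩, rfl⟩
    simp [(mem_filter.1 (hs hx)).2, (mem_filter.1 (hs hy)).2]
  have hlt := Submodule.finrank_lt (s := LinearMap.ker φ)
    fun htop => hφ (LinearMap.ker_eq_top.1 htop)
  have := Submodule.finrank_mono hker
  simp only [Module.finrank_fin_fun] at hlt
  omega

lemma exists_removal_disjoint_convexHull {t : ℕ} {B C : Finset (Fin d → ℝ)}
    (hd : 1 ≤ d) (hgp : GenPos X) (hX : d + 1 ≤ X.card) (hBCX : B ∪ C ⊆ X)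
    (hBC : Disjoint B C) (hcard : B.card + C.card ≤ 2 * t + d) :
    ∃ Y ⊆ B ∪ C, Y.card ≤ t ∧ Disjoint (convexHull ℝ (↑(B \ Y) : Set (Fin d → ℝ)))
      (convexHull ℝ (↑(C \ Y) : Set (Fin d → ℝ))) := by
  by_cases hsmall : (B ∪ C).card ≤ d + 1
  · refine ⟨∅, empty_subset _, by simp, ?_⟩
    simpa using (hgp.affineIndependent_of_subset hX hBCX hsmall).disjoint_convexHull
      subset_union_left subset_union_right hBC
  obtain ⟨D, hD, hDcard⟩ := exists_subset_card_eq (s := B ∪ C) (n := d) (by omega)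
  obtain ⟨φ, hφ, c, hDφ⟩ := exists_hyperplane_through_finset (𝕜 := ℝ)
    (card_pos.1 (by omega : 0 < D.card)) (by simp [hDcard])
  have hHcard : D.card ≤ ((B ∪ C).filter (φ · = c)).card :=
    card_le_card fun x hx => mem_filter.2 ⟨hD hx, hDφ x hx⟩
  have hHind := hgp.affineIndependent_of_subset hX ((filter_subset _ _).trans hBCX)
    (((hgp.mono hBCX).card_filter_eq_le hφ c).trans (by omega))
  obtain ⟨Y, hY, hYcard, hsep⟩ := exists_removal_disjoint_convexHull_of_hyperplane hBC hHind
  exact ⟨Y, hY, by omega, hsep⟩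

end GenPos

/-- Proposition 3.5: if `X` is a set of `n ≥ r(d+2)` points in general position in
`ℝ^d` and some partition of `X` into `r` parts tolerates `t` deletions, then
`⌊n/r⌋ ≥ t + ⌊d/2⌋`; consequently `T(n,d,r) ≤ ⌊n/r⌋ − ⌊d/2⌋`. -/
theorem tolerance_upper_bound {d r t n : ℕ} (hd : 1 ≤ d) (hr : 2 ≤ r)
    (hn : r * (d + 2) ≤ n)
    (X : Finset (Fin d → ℝ)) (hcard : X.card = n) (hgp : GenPos X)
    (A : Fin r → Finset (Fin d → ℝ))
    (hdisj : ∀ i j, i ≠ j → Disjoint (A i) (A j))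
    (hcover : X = Finset.univ.biUnion A)
    (htol : ∀ Y : Finset (Fin d → ℝ), Y ⊆ X → Y.card ≤ t →
      (⋂ i : Fin r, convexHull ℝ ((A i \ Y : Finset (Fin d → ℝ)) : Set (Fin d → ℝ))).Nonempty) :
    t + d / 2 ≤ n / r := by
  have hX : d + 1 ≤ X.card := by nlinarith
  have hAX : ∀ i, A i ⊆ X := fun i => hcover ▸ subset_biUnion_of_mem A (mem_univ i)
  have hpair : ∀ i j, i ≠ j → 2 * t + d + 1 ≤ (A i).card + (A j).card := by
    intro i j hij
    by_contra! hsmall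
    have hijX := union_subset (hAX i) (hAX j)
    obtain ⟨Y, hY, hYt, hsep⟩ :=
      hgp.exists_removal_disjoint_convexHull (t := t) hd hX hijX (hdisj i j hij) (by omega)
    obtain ⟨p, hp⟩ := htol Y (hY.trans hijX) hYt
    exact hsep.ne_of_mem (Set.mem_iInter.1 hp i) (Set.mem_iInter.1 hp j) rfl
  have hsum : ∑ i, (A i).card = n := by
    rw [← hcard, hcover, card_biUnion fun i _ j _ hij => hdisj i j hij]
  have hcount :=
    card_mul_le_two_mul_sum_of_le_add (fun i => (A i).card) (by simpa using hr) hpair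
  rw [Fintype.card_fin, hsum] at hcount
  rw [Nat.le_div_iff_mul_le (by omega)]
  have := Nat.div_mul_le_self d 2
  nlinarith
end

section
/- Every finite set X of at least r·(t + 1)·(2r − 1) points in ℝ admits a partition into r disjoint parts A₁, …, A_r such that ⋂_{i=1}^r conv(A_i \ Y) ≠ ∅ for every Y ⊆ X with |Y| ≤ t. In other words, N(1, t, r) ≤ r(t+1)(2r−1). -/
private lemma exists_survivor {t : ℕ} (Y : Finset ℝ) (hY : Y.card ≤ t)
    (f : Fin (t+1) → ℝ) (hf : Function.Injective f) : ∃ s, f s ∉ Y := by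
  by_contra h
  push_neg at h
  have hsub : Finset.image f Finset.univ ⊆ Y := by
    intro x hx
    obtain ⟨s, -, rfl⟩ := Finset.mem_image.mp hx
    exact h s
  have := Finset.card_le_card hsub
  rw [Finset.card_image_of_injective _ hf, Finset.card_univ, Fintype.card_fin] at this
  omega

/-- `N(1,t,r) ≤ r(t+1)(2r−1)`: every finite set of at least `r(t+1)(2r−1)` points in
`ℝ` admits a partition into `r` disjoint parts whose convex hulls intersect even
after the removal of any `t` points. -/
theorem tolerated_tverberg_dim_one (r t : ℕ) (hr : 1 ≤ r)
    (X : Finset ℝ) (hcard : r * (t + 1) * (2 * r - 1) ≤ X.card) :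
    ∃ A : Fin r → Finset ℝ,
      (∀ i j, i ≠ j → Disjoint (A i) (A j)) ∧
      (X = Finset.univ.biUnion A) ∧
      ∀ Y : Finset ℝ, Y ⊆ X → Y.card ≤ t →
        (⋂ i : Fin r, convexHull ℝ ((A i \ Y : Finset ℝ) : Set ℝ)).Nonempty := by
  have hr0 : 0 < r := hr
  set n := X.card with hn
  have h1 : (t + 1) * r ≤ n := by
    have h2 : 1 ≤ 2 * r - 1 := by omega
    calc (t + 1) * r = r * (t + 1) * 1 := by ring
      _ ≤ r * (t + 1) * (2 * r - 1) := Nat.mul_le_mul_left _ h2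
      _ ≤ n := hcard
  let e : Fin n ≃o X := X.orderIsoOfFin rfl
  have einj : Function.Injective (fun k : Fin n => (e k : ℝ)) :=
    fun a b hab => e.injective (Subtype.coe_injective hab)
  have emono : ∀ {a b : Fin n}, (a : ℕ) ≤ b → (e a : ℝ) ≤ (e b : ℝ) := by
    intro a b hab
    exact_mod_cast Subtype.coe_le_coe.mpr (e.monotone hab)
  let A : Fin r → Finset ℝ := fun i =>
    (Finset.univ.filter (fun k : Fin n => (k : ℕ) % r = (i : ℕ))).image
      (fun k => (e k : ℝ))
  have memA : ∀ (i : Fin r) (k : Fin n), (k : ℕ) % r = (i : ℕ) → (e k : ℝ) ∈ A i := by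
    intro i k hk
    exact Finset.mem_image.mpr ⟨k, Finset.mem_filter.mpr ⟨Finset.mem_univ _, hk⟩, rfl⟩
  refine ⟨A, ?_, ?_, ?_⟩
  · -- disjointness
    intro i j hij
    rw [Finset.disjoint_left]
    intro x hxi hxj
    obtain ⟨k, hk, rfl⟩ := Finset.mem_image.mp hxi
    obtain ⟨k', hk', hkk'⟩ := Finset.mem_image.mp hxj
    have : k' = k := einj hkk'
    subst this
    rw [Finset.mem_filter] at hk hk'
    exact hij (Fin.ext (hk.2.symm.trans hk'.2))
  · -- partition
    ext x
    simp only [Finset.mem_biUnion, Finset.mem_univ, true_and]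
    constructor
    · intro hx
      refine ⟨⟨(e.symm ⟨x, hx⟩ : ℕ) % r, Nat.mod_lt _ hr0⟩, ?_⟩
      have := memA ⟨(e.symm ⟨x, hx⟩ : ℕ) % r, Nat.mod_lt _ hr0⟩ (e.symm ⟨x, hx⟩) rfl
      simpa using this
    · rintro ⟨i, hxi⟩
      obtain ⟨k, -, rfl⟩ := Finset.mem_image.mp hxi
      exact (e k).2
  · -- tolerance
    intro Y hYX hYt
    -- low survivors
    have Hlow : ∀ i : Fin r, ∃ k : Fin n,
        (k : ℕ) % r = (i : ℕ) ∧ (k : ℕ) < (t + 1) * r ∧ (e k : ℝ) ∉ Y := by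
      intro i
      have hlt : ∀ s : Fin (t + 1), (i : ℕ) + (s : ℕ) * r < (t + 1) * r := by
        intro s
        have hs : (s : ℕ) ≤ t := by omega
        calc (i : ℕ) + (s : ℕ) * r < r + t * r :=
              Nat.add_lt_add_of_lt_of_le i.isLt (Nat.mul_le_mul_right r hs)
          _ = (t + 1) * r := by ring
      have hlt' : ∀ s : Fin (t + 1), (i : ℕ) + (s : ℕ) * r < n :=
        fun s => lt_of_lt_of_le (hlt s) h1
      let g : Fin (t + 1) → Fin n := fun s => ⟨(i : ℕ) + (s : ℕ) * r, hlt' s⟩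
      have hginj : Function.Injective g := by
        intro a b hab
        have h' : (i : ℕ) + (a : ℕ) * r = (i : ℕ) + (b : ℕ) * r := congrArg Fin.val hab
        have h'' : (a : ℕ) * r = (b : ℕ) * r := by omega
        exact Fin.ext (Nat.eq_of_mul_eq_mul_right hr0 h'')
      obtain ⟨s, hs⟩ := exists_survivor Y hYt (fun s => (e (g s) : ℝ)) (einj.comp hginj)
      refine ⟨g s, ?_, hlt s, hs⟩
      show ((i : ℕ) + (s : ℕ) * r) % r = (i : ℕ)
      rw [Nat.add_mul_mod_self_right, Nat.mod_eq_of_lt i.isLt]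
    -- high survivors (when r ≥ 2)
    have Hhigh : 2 ≤ r → ∀ j : Fin r, ∃ k : Fin n,
        (k : ℕ) % r = (j : ℕ) ∧ (t + 1) * r ≤ (k : ℕ) ∧ (e k : ℝ) ∉ Y := by
      intro hr2 j
      have h3 : (2 * t + 2) * r ≤ n := by
        have h2' : 3 ≤ 2 * r - 1 := by omega
        have := Nat.mul_le_mul_left (r * (t + 1)) h2'
        have heq : r * (t + 1) * 3 = (2 * t + 2) * r + (t + 1) * r := by ring
        omega
      have hjn : (j : ℕ) < n := lt_of_lt_of_le j.isLt (le_trans (Nat.le_mul_of_pos_left r (by omega)) h1)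
      set q : ℕ := (n - 1 - (j : ℕ)) / r with hq
      have hq1 : q * r ≤ n - 1 - (j : ℕ) := Nat.div_mul_le_self _ _
      have hq2 : 2 * t + 1 ≤ q := by
        rw [hq, Nat.le_div_iff_mul_le hr0]
        have heq : (2 * t + 1) * r + r = (2 * t + 2) * r := by ring
        omega
      have hlt' : ∀ s : Fin (t + 1), (j : ℕ) + (q - (s : ℕ)) * r < n := by
        intro s
        have h4 : (q - (s : ℕ)) * r ≤ q * r := Nat.mul_le_mul_right r (Nat.sub_le q s)
        omega
      let g : Fin (t + 1) → Fin n := fun s => ⟨(j : ℕ) + (q - (s : ℕ)) * r, hlt' s⟩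
      have hginj : Function.Injective g := by
        intro a b hab
        have h' : (j : ℕ) + (q - (a : ℕ)) * r = (j : ℕ) + (q - (b : ℕ)) * r :=
          congrArg Fin.val hab
        have h'' : q - (a : ℕ) = q - (b : ℕ) :=
          Nat.eq_of_mul_eq_mul_right hr0 (by omega)
        have ha : (a : ℕ) ≤ q := le_trans (by omega) hq2
        have hb : (b : ℕ) ≤ q := le_trans (by omega) hq2
        exact Fin.ext (by omega)
      obtain ⟨s, hs⟩ := exists_survivor Y hYt (fun s => (e (g s) : ℝ)) (einj.comp hginj)
      refine ⟨g s, ?_, ?_, hs⟩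
      · show ((j : ℕ) + (q - (s : ℕ)) * r) % r = (j : ℕ)
        rw [Nat.add_mul_mod_self_right, Nat.mod_eq_of_lt j.isLt]
      · show (t + 1) * r ≤ (j : ℕ) + (q - (s : ℕ)) * r
        have hs' : (s : ℕ) ≤ t := by omega
        have h5 : t + 1 ≤ q - (s : ℕ) := by omega
        have := Nat.mul_le_mul_right r h5
        omega
    choose klow hklow using Hlow
    haveI : Nonempty (Fin r) := ⟨⟨0, hr0⟩⟩
    obtain ⟨i0, hmax⟩ := Finite.exists_max (fun i : Fin r => (e (klow i) : ℝ))
    refine ⟨(e (klow i0) : ℝ), Set.mem_iInter.mpr ?_⟩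
    intro j
    have hmemlow : ∀ i : Fin r, (e (klow i) : ℝ) ∈ ((A i \ Y : Finset ℝ) : Set ℝ) := by
      intro i
      rw [Finset.coe_sdiff]
      exact ⟨memA i (klow i) (hklow i).1, (hklow i).2.2⟩
    by_cases hj : j = i0
    · subst hj
      exact subset_convexHull ℝ _ (hmemlow j)
    · have hr2 : 2 ≤ r := by
        by_contra h
        push_neg at h
        exact hj (Fin.ext (by omega))
      obtain ⟨kh, hkh1, hkh2, hkh3⟩ := Hhigh hr2 j
      have hmemhigh : (e kh : ℝ) ∈ ((A j \ Y : Finset ℝ) : Set ℝ) := by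
        rw [Finset.coe_sdiff]
        exact ⟨memA j kh hkh1, hkh3⟩
      have hmc : (e (klow j) : ℝ) ≤ (e (klow i0) : ℝ) := hmax j
      have hcM : (e (klow i0) : ℝ) ≤ (e kh : ℝ) :=
        emono (le_trans (le_of_lt (hklow i0).2.1) hkh2)
      have hseg : segment ℝ (e (klow j) : ℝ) (e kh : ℝ) ⊆
          convexHull ℝ ((A j \ Y : Finset ℝ) : Set ℝ) :=
        (convex_convexHull ℝ _).segment_subset
          (subset_convexHull ℝ _ (hmemlow j)) (subset_convexHull ℝ _ hmemhigh)
      apply hseg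
      rw [segment_eq_Icc (le_trans hmc hcM)]
      exact ⟨hmc, hcM⟩
end

section
/- Let X be the vertex set of a cyclic polytope in ℝ^d, i.e., X = {γ(α₁), …, γ(α_n)} with α₁ < … < α_n and γ(α) = (α, α², …, α^d), and suppose n ≥ d + 1. Then for every subset S ⊆ X with |S| ≤ ⌊d/2⌋, the convex hull conv(S) is a face of conv(X); in particular conv(S) ∩ conv(X \ S) = ∅ whenever S is nonempty. -/
/-- Neighborliness of cyclic polytopes: if `X` consists of `n ≥ d+1` points on the
moment curve `γ(α) = (α, α², …, α^d)` in `ℝ^d`, then for every `S ⊆ X` with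
`|S| ≤ ⌊d/2⌋`, `conv(S)` is a face (an exposed subset) of `conv(X)`; in particular
`conv(S) ∩ conv(X \ S) = ∅` whenever `S` is nonempty. -/
theorem cyclic_polytope_neighborly (d n : ℕ) (hd : 1 ≤ d) (hn : d + 1 ≤ n)
    (α : Fin n → ℝ) (hα : StrictMono α)
    (X : Finset (Fin d → ℝ))
    (hX : X = Finset.univ.image (fun j : Fin n => (fun k : Fin d => α j ^ (k.val + 1))))
    (S : Finset (Fin d → ℝ)) (hS : S ⊆ X) (hScard : S.card ≤ d / 2) :
    IsExposed ℝ (convexHull ℝ (X : Set (Fin d → ℝ))) (convexHull ℝ (S : Set (Fin d → ℝ))) ∧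
      (S.Nonempty →
        convexHull ℝ (S : Set (Fin d → ℝ)) ∩
          convexHull ℝ ((X \ S : Finset (Fin d → ℝ)) : Set (Fin d → ℝ)) = ∅) := by
  classical
  set γ : Fin n → (Fin d → ℝ) := fun j k => α j ^ (k.val + 1) with hγ
  have hγinj : Function.Injective γ := by
    intro i j h
    have h0 := congrFun h ⟨0, hd⟩
    simp only [hγ] at h0
    exact hα.injective (by simpa using h0)
  set T : Finset (Fin n) := Finset.univ.filter (fun j => γ j ∈ S) with hT
  have hmemT : ∀ j, j ∈ T ↔ γ j ∈ S := by
    intro j; simp [hT]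
  have hST : S = T.image γ := by
    ext v
    constructor
    · intro hv
      have hvX : v ∈ X := hS hv
      rw [hX, Finset.mem_image] at hvX
      obtain ⟨j, -, hj⟩ := hvX
      exact Finset.mem_image.2 ⟨j, (hmemT j).2 (by rw [hj]; exact hv), hj⟩
    · intro hv
      obtain ⟨j, hjT, hj⟩ := Finset.mem_image.1 hv
      rw [← hj]; exact (hmemT j).1 hjT
  have hTcard : T.card ≤ d / 2 := by
    rw [← Finset.card_image_of_injective T hγinj, ← hST]; exact hScard
  set q : Polynomial ℝ := ∏ j ∈ T, (Polynomial.X - Polynomial.C (α j)) ^ 2 with hq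
  have hqdeg : q.natDegree < d + 1 := by
    have : q.natDegree = ∑ j ∈ T, 2 := by
      rw [hq, Polynomial.natDegree_prod]
      · refine Finset.sum_congr rfl fun j _ => ?_
        rw [Polynomial.natDegree_pow, Polynomial.natDegree_X_sub_C]
      · intro j _
        exact pow_ne_zero 2 (Polynomial.X_sub_C_ne_zero (α j))
    rw [this, Finset.sum_const, smul_eq_mul]
    have h1 : T.card * 2 ≤ (d / 2) * 2 := Nat.mul_le_mul_right 2 hTcard
    have h2 : (d / 2) * 2 ≤ d := Nat.div_mul_le_self d 2
    omega
  set c : ℕ → ℝ := fun i => q.coeff i with hc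
  have heval : ∀ t : ℝ, q.eval t = ∑ i ∈ Finset.range (d + 1), c i * t ^ i :=
    fun t => Polynomial.eval_eq_sum_range' hqdeg t
  have hqev : ∀ t : ℝ, q.eval t = ∏ j ∈ T, (t - α j) ^ 2 := by
    intro t; simp [hq, Polynomial.eval_prod]
  have hqnonneg : ∀ t : ℝ, 0 ≤ q.eval t := by
    intro t; rw [hqev]; exact Finset.prod_nonneg fun j _ => sq_nonneg _
  have hq0 : ∀ j : Fin n, q.eval (α j) = 0 ↔ j ∈ T := by
    intro j
    rw [hqev, Finset.prod_eq_zero_iff]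
    constructor
    · rintro ⟨i, hi, h⟩
      have : α j = α i := by
        have := pow_eq_zero_iff (n := 2) (by norm_num) |>.1 h
        linarith [sub_eq_zero.1 this]
      rwa [hα.injective this]
    · intro hj; exact ⟨j, hj, by simp⟩
  -- the linear functional
  set L : (Fin d → ℝ) →ₗ[ℝ] ℝ :=
    { toFun := fun x => ∑ k : Fin d, (-(c (k.val + 1))) * x k
      map_add' := by
        intro x y
        simp [mul_add, Finset.sum_add_distrib]
      map_smul' := by
        intro r x
        simp [Finset.mul_sum]
        ring_nf
        refine Finset.sum_congr rfl fun k _ => by ring } with hL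
  set l : (Fin d → ℝ) →L[ℝ] ℝ := LinearMap.toContinuousLinearMap L with hl
  have hlapp : ∀ x, l x = ∑ k : Fin d, (-(c (k.val + 1))) * x k := fun x => rfl
  have hlγ : ∀ j : Fin n, l (γ j) = c 0 - q.eval (α j) := by
    intro j
    rw [hlapp, heval, Finset.sum_range_succ']
    have : ∑ k : Fin d, (-(c (k.val + 1))) * γ j k
        = -∑ i ∈ Finset.range d, c (i + 1) * α j ^ (i + 1) := by
      rw [← Fin.sum_univ_eq_sum_range (fun i => c (i + 1) * α j ^ (i + 1)) d]
      rw [← Finset.sum_neg_distrib]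
      refine Finset.sum_congr rfl fun k _ => by simp [hγ]
    rw [this]
    simp only [pow_zero, mul_one]
    ring
  have hmemX : ∀ v, v ∈ X ↔ ∃ j, γ j = v := by
    intro v; rw [hX]; simp [hγ]
  have hmaxX : ∀ v ∈ X, l v ≤ c 0 := by
    intro v hv
    obtain ⟨j, rfl⟩ := (hmemX v).1 hv
    rw [hlγ]
    linarith [hqnonneg (α j)]
  have heqS : ∀ v ∈ S, l v = c 0 := by
    intro v hv
    obtain ⟨j, hjT, rfl⟩ := Finset.mem_image.1 (hST ▸ hv)
    rw [hlγ, (hq0 j).2 hjT]; ring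
  have hltX : ∀ v ∈ X, v ∉ S → l v < c 0 := by
    intro v hv hvS
    obtain ⟨j, rfl⟩ := (hmemX v).1 hv
    have hjT : j ∉ T := fun h => hvS ((hmemT j).1 h)
    have : q.eval (α j) ≠ 0 := fun h => hjT ((hq0 j).1 h)
    have := lt_of_le_of_ne (hqnonneg (α j)) (Ne.symm this)
    rw [hlγ]; linarith
  have hub : ∀ x ∈ convexHull ℝ (X : Set (Fin d → ℝ)), l x ≤ c 0 := by
    intro x hx
    have : convexHull ℝ (X : Set (Fin d → ℝ)) ⊆ {y | l y ≤ c 0} :=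
      convexHull_min hmaxX (convex_halfSpace_le (l.toLinearMap.isLinear) (c 0))
    exact this hx
  have heqhull : ∀ x ∈ convexHull ℝ (S : Set (Fin d → ℝ)), l x = c 0 := by
    intro x hx
    have : convexHull ℝ (S : Set (Fin d → ℝ)) ⊆ {y | l y = c 0} :=
      convexHull_min heqS (convex_hyperplane (l.toLinearMap.isLinear) (c 0))
    exact this hx
  have hsub : convexHull ℝ (S : Set (Fin d → ℝ)) ⊆ convexHull ℝ (X : Set (Fin d → ℝ)) :=
    convexHull_mono (by exact_mod_cast hS)
  constructor
  · intro hne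
    refine ⟨l, ?_⟩
    ext x
    constructor
    · intro hx
      refine ⟨hsub hx, fun y hy => ?_⟩
      rw [heqhull x hx]
      exact hub y hy
    · rintro ⟨hxX, hmax⟩
      obtain ⟨s, hsS⟩ := Finset.Nonempty.mono (le_refl S)
        (by
          rcases hne with ⟨z, hz⟩
          by_contra h
          rw [Finset.not_nonempty_iff_eq_empty] at h
          rw [h] at hz
          simp at hz)
      have hsX : (s : Fin d → ℝ) ∈ convexHull ℝ (X : Set (Fin d → ℝ)) :=
        subset_convexHull ℝ _ (by exact_mod_cast hS hsS)
      have hxc : l x = c 0 := by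
        have h1 := hmax s hsX
        rw [heqS s hsS] at h1
        exact le_antisymm (hub x hxX) h1
      -- now extract weights
      rw [Finset.convexHull_eq] at hxX
      obtain ⟨w, hw0, hw1, hwx⟩ := hxX
      rw [Finset.centerMass_eq_of_sum_1 _ _ hw1] at hwx
      have hlsum : ∑ y ∈ X, w y * l y = c 0 := by
        have : l x = ∑ y ∈ X, w y * l y := by
          rw [← hwx, map_sum]
          exact Finset.sum_congr rfl fun y _ => by simp
        rw [← this, hxc]
      have hzero : ∀ y ∈ X, y ∉ S → w y = 0 := by
        intro y hy hyS
        by_contra hne0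
        have hwy : 0 < w y := lt_of_le_of_ne (hw0 y hy) (Ne.symm hne0)
        have hlt : ∑ z ∈ X, w z * l z < ∑ z ∈ X, w z * c 0 := by
          apply Finset.sum_lt_sum
          · intro z hz
            exact mul_le_mul_of_nonneg_left (hmaxX z hz) (hw0 z hz)
          · exact ⟨y, hy, by
              exact mul_lt_mul_of_pos_left (hltX y hy hyS) hwy⟩
        rw [hlsum, ← Finset.sum_mul, hw1, one_mul] at hlt
        exact lt_irrefl _ hlt
      have hwS : ∑ y ∈ S, w y = 1 := by
        rw [← hw1]
        exact (Finset.sum_subset hS fun y hy hyS => hzero y hy hyS).symm ▸ rfl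
      rw [Finset.convexHull_eq]
      refine ⟨w, fun y hy => hw0 y (hS hy), ?_, ?_⟩
      · rw [← hw1]
        exact Finset.sum_subset hS fun y hy hyS => hzero y hy hyS
      · rw [Finset.centerMass_eq_of_sum_1]
        · rw [← hwx]
          refine (Finset.sum_subset hS fun y hy hyS => ?_)
          rw [hzero y hy hyS, zero_smul]
        · rw [← hw1]
          exact Finset.sum_subset hS fun y hy hyS => hzero y hy hyS
  · intro hSne
    have hXS : (X \ S).Nonempty := by
      have hXcard : X.card = n := by
        rw [hX]
        rw [Finset.card_image_of_injective _ hγinj, Finset.card_univ, Fintype.card_fin]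
      have : S.card < X.card := by
        rw [hXcard]
        have : d / 2 < n := by omega
        omega
      rw [Finset.sdiff_nonempty]
      intro h
      have := Finset.card_le_card h
      omega
    obtain ⟨m, hm, hmax'⟩ : ∃ m ∈ X \ S, ∀ v ∈ X \ S, l v ≤ l m := by
      obtain ⟨m, hm, hmx⟩ := Finset.exists_max_image (X \ S) l hXS
      exact ⟨m, hm, hmx⟩
    have hmlt : l m < c 0 := hltX m (Finset.mem_sdiff.1 hm).1 (Finset.mem_sdiff.1 hm).2
    ext x
    simp only [Set.mem_inter_iff, Set.mem_empty_iff_false, iff_false, not_and]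
    intro hxS hxXS
    have h1 : l x = c 0 := heqhull x hxS
    have h2 : l x ≤ l m := by
      have : convexHull ℝ ((X \ S : Finset _) : Set (Fin d → ℝ)) ⊆ {y | l y ≤ l m} :=
        convexHull_min (fun v hv => hmax' v (by exact_mod_cast hv))
          (convex_halfSpace_le (l.toLinearMap.isLinear) (l m))
      exact this hxXS
    linarith
end

section
/- Let α₁ < α₂ < … < α_n be real numbers and let X = {γ(α₁), …, γ(α_n)} on the moment curve γ(α) = (α, α², …, α^d) ⊆ ℝ^d. Let A₁, …, A_r be the alternating partition A_i = {γ(α_j) : j ≡ i (mod r)}. If n ≥ (d+1)(⌊d/2⌋+1)(r−1) + 1, then ⋂_{i=1}^r conv(A_i) ≠ ∅. -/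
/-!
By Helly's theorem there is a point `O` lying in the convex hull of every subfamily of `X`
that omits at most `t = (⌊d/2⌋+1)(r-1)` points, because any `d+1` such subfamilies share a
point of `X`. If `O` were outside `conv(A_i)`, a hyperplane would separate them, and the open
side containing `O` would contain more than `t` points of `X`. On the moment curve that side is
`{Q < 0}` for a polynomial `Q` of degree at most `d` that is positive on `A_i`. Along
`α₁ < ⋯ < α_n` the sign of `Q` changes at most `d` times, so the indices with `Q(α_j) < 0` form
at most `⌊d/2⌋+1` runs of consecutive indices, and each run avoids the residue class of `i`
modulo `r`, hence has fewer than `r` elements: at most `t` points in all.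
-/

open Finset Polynomial

def signChanges (p : ℕ → Bool) (j : ℕ) : ℕ := #{k ∈ range j | p k ≠ p (k + 1)}

section signChanges

variable {p : ℕ → Bool}

theorem signChanges_mono (p : ℕ → Bool) : Monotone (signChanges p) := fun _ _ h =>
  card_le_card (filter_subset_filter _ (range_subset_range.2 h))

theorem signChanges_succ (p : ℕ → Bool) (j : ℕ) :
    signChanges p (j + 1) = signChanges p j + if p j ≠ p (j + 1) then 1 else 0 := by
  unfold signChanges
  rw [range_add_one, filter_insert]
  split_ifs
  · rw [card_insert_of_notMem (by simp)]
  · rfl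

theorem even_signChanges_iff (p : ℕ → Bool) (j : ℕ) : Even (signChanges p j) ↔ p j = p 0 := by
  induction j with
  | zero => simp [signChanges]
  | succ j ih =>
    rw [signChanges_succ]
    cases hj : p j <;> cases hj1 : p (j + 1) <;> cases h0 : p 0 <;>
      simp_all [Nat.even_add_one]

theorem eq_of_signChanges_eq {j k l : ℕ} (hjk : j ≤ k) (hkl : k ≤ l)
    (h : signChanges p j = signChanges p l) : p k = p j := by
  induction k, hjk using Nat.le_induction with
  | base => rfl
  | succ k hjk ih =>
    have hk : signChanges p (k + 1) = signChanges p k :=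
      le_antisymm ((signChanges_mono p hkl).trans (h.symm.le.trans (signChanges_mono p hjk)))
        (signChanges_mono p k.le_succ)
    rw [signChanges_succ] at hk
    have : p k = p (k + 1) := by by_contra hne; simp [hne] at hk
    rw [← this, ih (by omega)]

theorem card_filter_signChanges_eq_le {n r : ℕ}
    (hwin : ∀ a, a + r ≤ n → ∃ m ∈ Ico a (a + r), p m = false) (v : ℕ) :
    #{j ∈ range n | p j ∧ signChanges p j = v} ≤ r - 1 := by
  set F : Finset ℕ := {j ∈ range n | p j ∧ signChanges p j = v}
  rcases F.eq_empty_or_nonempty with hF | hF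
  · simp [hF]
  have ha := mem_filter.1 (F.min'_mem hF)
  have hb := mem_filter.1 (F.max'_mem hF)
  have hrun : ∀ k, F.min' hF ≤ k → k ≤ F.max' hF → p k :=
    fun k h₁ h₂ => (eq_of_signChanges_eq h₁ h₂ (ha.2.2.trans hb.2.2.symm)).trans ha.2.1
  have hlen : F.max' hF + 1 < F.min' hF + r := by
    by_contra! hge
    obtain ⟨m, hm, hpm⟩ := hwin (F.min' hF) (by have := mem_range.1 hb.1; omega)
    rw [mem_Ico] at hm
    simp [hrun m hm.1 (by omega)] at hpm
  calc #F ≤ #(Icc (F.min' hF) (F.max' hF)) :=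
        card_le_card fun j hj => mem_Icc.2 ⟨F.min'_le j hj, F.le_max' j hj⟩
    _ = F.max' hF + 1 - F.min' hF := Nat.card_Icc _ _
    _ ≤ r - 1 := by omega

theorem card_image_signChanges_le {n s : ℕ} (hc : signChanges p (n - 1) ≤ s) :
    #({j ∈ range n | p j}.image (signChanges p)) ≤ s / 2 + 1 := by
  set V := {j ∈ range n | p j}.image (signChanges p)
  have hV : ∀ v ∈ V, (v % 2 = 0 ↔ p 0) ∧ v ≤ s := by
    intro v hv
    obtain ⟨j, hj, rfl⟩ := mem_image.1 hv
    obtain ⟨hjn, hpj⟩ := mem_filter.1 hj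
    refine ⟨by rw [← Nat.even_iff, even_signChanges_iff, hpj, eq_comm], ?_⟩
    exact (signChanges_mono p (by have := mem_range.1 hjn; omega)).trans hc
  have hinj : Set.InjOn (· / 2) V := fun v hv w hw hvw => by
    have hparity := (hV v hv).1.trans (hV w hw).1.symm
    simp only at hvw
    omega
  calc #V = #(V.image (· / 2)) := (card_image_of_injOn hinj).symm
    _ ≤ #(range (s / 2 + 1)) := card_le_card fun x hx => by
        obtain ⟨v, hv, rfl⟩ := mem_image.1 hx
        have := (hV v hv).2
        rw [mem_range]
        omega
    _ = s / 2 + 1 := card_range _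

theorem card_filter_le_of_signChanges_le {n r s : ℕ}
    (hwin : ∀ a, a + r ≤ n → ∃ m ∈ Ico a (a + r), p m = false)
    (hc : signChanges p (n - 1) ≤ s) : #{j ∈ range n | p j} ≤ (s / 2 + 1) * (r - 1) :=
  calc #{j ∈ range n | p j}
      ≤ (r - 1) * #({j ∈ range n | p j}.image (signChanges p)) :=
        card_le_mul_card_image _ _ fun v _ => by
          rw [filter_filter]
          exact card_filter_signChanges_eq_le hwin v
    _ ≤ (r - 1) * (s / 2 + 1) := Nat.mul_le_mul_left _ (card_image_signChanges_le hc)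
    _ = (s / 2 + 1) * (r - 1) := Nat.mul_comm _ _

end signChanges

theorem Nat.exists_mem_Ico_mod_eq (a : ℕ) {r i : ℕ} (hi : i < r) :
    ∃ m ∈ Ico a (a + r), m % r = i := by
  have hr : 0 < r := by omega
  refine ⟨a + (i + r - a % r) % r,
    mem_Ico.2 ⟨by omega, by have := Nat.mod_lt (i + r - a % r) hr; omega⟩, ?_⟩
  have h : a + (i + r - a % r) = i + r + r * (a / r) := by
    have := Nat.div_add_mod a r
    have := Nat.mod_lt a hr
    omega
  rw [Nat.add_mod_mod, h, Nat.add_mul_mod_self_left, Nat.add_mod_right, Nat.mod_eq_of_lt hi]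

theorem exists_mem_Ioo_eq_zero_of_decide_ne {g : ℝ → ℝ} {x y : ℝ} (hxy : x ≤ y)
    (hg : ContinuousOn g (Set.Icc x y)) (hx : g x ≠ 0) (hy : g y ≠ 0)
    (h : decide (g x < 0) ≠ decide (g y < 0)) : ∃ z ∈ Set.Ioo x y, g z = 0 := by
  rcases hx.lt_or_gt with hx | hx
  · have : 0 < g y := lt_of_le_of_ne (by simpa [hx] using h) hy.symm
    exact intermediate_value_Ioo hxy hg ⟨hx, this⟩
  · have : g y < 0 := by simpa [hx.not_gt] using h
    exact intermediate_value_Ioo' hxy hg ⟨this, hx⟩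

theorem signChanges_le_card_of_continuous {g : ℝ → ℝ} (hg : Continuous g) {a : ℕ → ℝ} {n : ℕ}
    (ha : StrictMonoOn a (Set.Iio n)) (hne : ∀ j < n, g (a j) ≠ 0) {Z : Finset ℝ}
    (hZ : ∀ x, g x = 0 → x ∈ Z) : signChanges (fun j => decide (g (a j) < 0)) (n - 1) ≤ #Z := by
  set C : Finset ℕ := {k ∈ range (n - 1) | decide (g (a k) < 0) ≠ decide (g (a (k + 1)) < 0)}
  have hroot : ∀ k ∈ C, ∃ z ∈ Set.Ioo (a k) (a (k + 1)), g z = 0 := fun k hk => by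
    obtain ⟨hk, hsign⟩ := mem_filter.1 hk
    have := mem_range.1 hk
    exact exists_mem_Ioo_eq_zero_of_decide_ne
      (ha (by simp; omega) (by simp; omega) k.lt_succ_self).le hg.continuousOn
      (hne k (by omega)) (hne _ (by omega)) hsign
  choose! z hz hz₀ using hroot
  have hmono : StrictMonoOn z C := fun k hk l hl hkl => by
    have := mem_range.1 (mem_filter.1 hl).1
    calc z k < a (k + 1) := (hz k hk).2
      _ ≤ a l := ha.monotoneOn (by simp; omega) (by simp; omega) hkl
      _ < z l := (hz l hl).1
  calc #C = #(C.image z) := (card_image_of_injOn hmono.injOn).symm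
    _ ≤ #Z := card_le_card (image_subset_iff.2 fun k hk => hZ _ (hz₀ k hk))

theorem card_filter_eval_neg_le (Q : ℝ[X]) {n r : ℕ} {α : Fin n → ℝ} (hα : StrictMono α)
    (hne : ∀ j, Q.eval (α j) ≠ 0) (i : Fin r)
    (hpos : ∀ j : Fin n, j.val % r = i → 0 < Q.eval (α j)) :
    #{j | Q.eval (α j) < 0} ≤ (Q.natDegree / 2 + 1) * (r - 1) := by
  rcases n.eq_zero_or_pos with rfl | hn
  · simp
  have hQ : Q ≠ 0 := by
    rintro rfl
    exact hne ⟨0, hn⟩ eval_zero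
  set a : ℕ → ℝ := fun k => if h : k < n then α ⟨k, h⟩ else 0
  have ha : ∀ j : Fin n, a j = α j := fun j => dif_pos j.isLt
  have hamono : StrictMonoOn a (Set.Iio n) := fun k hk l hl hkl => by
    simp only [Set.mem_Iio] at hk hl
    simp only [a, dif_pos hk, dif_pos hl]
    exact hα hkl
  have hchg := signChanges_le_card_of_continuous Q.continuous hamono
    (fun j hj => ha ⟨j, hj⟩ ▸ hne ⟨j, hj⟩) (Z := Q.roots.toFinset) (fun x hx => by simp [hQ, hx])
  have hwin : ∀ b, b + r ≤ n → ∃ m ∈ Ico b (b + r), decide (Q.eval (a m) < 0) = false := by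
    intro b hb
    obtain ⟨m, hm, hmi⟩ := Nat.exists_mem_Ico_mod_eq b i.isLt
    have hmn : m < n := by have := mem_Ico.1 hm; omega
    exact ⟨m, hm, by simpa [ha ⟨m, hmn⟩] using (hpos ⟨m, hmn⟩ hmi).le⟩
  calc #{j | Q.eval (α j) < 0} = #{k ∈ range n | decide (Q.eval (a k) < 0)} := by
        simp only [card_filter, ← ha, decide_eq_true_eq]
        exact Fin.sum_univ_eq_sum_range (fun k => if Q.eval (a k) < 0 then 1 else 0) n
    _ ≤ (#Q.roots.toFinset / 2 + 1) * (r - 1) := card_filter_le_of_signChanges_le hwin hchg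
    _ ≤ (Q.natDegree / 2 + 1) * (r - 1) := by
        gcongr
        exact Q.roots.toFinset_card_le.trans Q.card_roots'

theorem exists_mem_convexHull_of_card_compl_le {ι E : Type*} [Fintype ι] [DecidableEq ι]
    [AddCommGroup E] [Module ℝ E] [FiniteDimensional ℝ E] (x : ι → E) {t : ℕ}
    (h : (Module.finrank ℝ E + 1) * t < Fintype.card ι) :
    ∃ O, ∀ S : Finset ι, #Sᶜ ≤ t → O ∈ convexHull ℝ (x '' S) := by
  obtain ⟨O, hO⟩ := Convex.helly_theorem' (𝕜 := ℝ) (s := ({S | #Sᶜ ≤ t} : Finset (Finset ι)))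
    (F := fun S : Finset ι => convexHull ℝ (x '' S)) (fun _ _ => convex_convexHull ℝ _) (by
      intro I hI hIcard
      have hU : #(I.biUnion (·ᶜ)) < Fintype.card ι :=
        calc #(I.biUnion (·ᶜ)) ≤ ∑ S ∈ I, #Sᶜ := card_biUnion_le
          _ ≤ #I * t := sum_le_card_nsmul _ _ _ fun S hS => (mem_filter.1 (hI hS)).2
          _ < Fintype.card ι := (Nat.mul_le_mul_right t hIcard).trans_lt h
      obtain ⟨j, -, hj⟩ := exists_mem_notMem_of_card_lt_card (t := univ) (by simpa using hU)
      refine ⟨x j, Set.mem_iInter₂.2 fun S hS => subset_convexHull ℝ _ ⟨j, ?_, rfl⟩⟩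
      by_contra hjS
      exact hj (mem_biUnion.2 ⟨S, hS, mem_compl.2 hjS⟩))
  exact ⟨O, fun S hS => Set.mem_iInter₂.1 hO S (by simpa using hS)⟩

theorem exists_lt_card_filter_lt {ι E : Type*} [Fintype ι]
    [AddCommGroup E] [Module ℝ E] [FiniteDimensional ℝ E] (x : ι → E) {t : ℕ}
    (h : (Module.finrank ℝ E + 1) * t < Fintype.card ι) :
    ∃ O, ∀ (f : E →ₗ[ℝ] ℝ) (c : ℝ), f O < c → t < #{j | f (x j) < c} := by
  classical
  obtain ⟨O, hO⟩ := exists_mem_convexHull_of_card_compl_le x h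
  refine ⟨O, fun f c hOc => ?_⟩
  by_contra! hle
  have hS := hO {j | c ≤ f (x j)} (by simpa [filter_not] using hle)
  have : convexHull ℝ (x '' ({j | c ≤ f (x j)} : Finset ι)) ⊆ {y | c ≤ f y} :=
    convexHull_min (by rintro _ ⟨j, hj, rfl⟩; simpa using hj) (convex_halfSpace_ge f.isLinear c)
  exact (this hS).not_gt hOc

theorem exists_natDegree_le_eval_eq_apply_moment {d : ℕ} (f : (Fin d → ℝ) →ₗ[ℝ] ℝ) :
    ∃ Q : ℝ[X], Q.natDegree ≤ d ∧ ∀ x, Q.eval x = f (fun k => x ^ (k.val + 1)) := by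
  refine ⟨∑ k : Fin d, C (f (Pi.single k 1)) * X ^ (k.val + 1), ?_, fun x => ?_⟩
  · refine natDegree_sum_le_of_forall_le _ _ fun k _ => natDegree_C_mul_X_pow_le _ _ |>.trans ?_
    omega
  · rw [f.pi_apply_eq_sum_univ]
    simp only [eval_finsetSum, eval_mul, eval_C, eval_pow, eval_X, smul_eq_mul, mul_comm]
    congr! 3 with k -
    ext j
    simp only [Pi.single_apply, eq_comm]

theorem alternating_partition_moment_curve_general (d n r : ℕ)
    (hn : (d + 1) * (d / 2 + 1) * (r - 1) + 1 ≤ n)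
    (α : Fin n → ℝ) (hα : StrictMono α) :
    (⋂ i : Fin r, convexHull ℝ
      (((Finset.univ.filter (fun j : Fin n => j.val % r = i.val)).image
        (fun j : Fin n => (fun k : Fin d => α j ^ (k.val + 1))) :
          Finset (Fin d → ℝ)) : Set (Fin d → ℝ))).Nonempty := by
  classical
  set x : Fin n → Fin d → ℝ := fun j k => α j ^ (k.val + 1)
  obtain ⟨O, hO⟩ := exists_lt_card_filter_lt x (t := (d / 2 + 1) * (r - 1))
    (by rw [Module.finrank_fin_fun, Fintype.card_fin, ← Nat.mul_assoc]; omega)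
  refine ⟨O, Set.mem_iInter.2 fun i => ?_⟩
  by_contra hOi
  obtain ⟨f, u, hfO, hfA⟩ := geometric_hahn_banach_point_closed (convex_convexHull ℝ _)
    ((finite_toSet _).isClosed_convexHull (𝕜 := ℝ)) hOi
  -- a level strictly between `f O` and `f(A_i)`, missed by `f(X)`, so `Q` below vanishes on no `α j`
  obtain ⟨c, ⟨hOc, hcu⟩, hc⟩ := (Set.Ioo_infinite hfO).exists_notMem_finset (univ.image (f ∘ x))
  obtain ⟨Q, hQd, hQ⟩ := exists_natDegree_le_eval_eq_apply_moment (f : (Fin d → ℝ) →ₗ[ℝ] ℝ)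
  have hQc : ∀ j, (Q - C c).eval (α j) = f (x j) - c := by simp [hQ, x]
  have hlow := hO f c hOc
  have hup := card_filter_eval_neg_le (Q - C c) hα
    (fun j => by rw [hQc, sub_ne_zero]; exact fun h => hc (mem_image.2 ⟨j, mem_univ _, h⟩)) i
    (fun j hj => by
      rw [hQc, sub_pos]
      exact hcu.trans (hfA _ (subset_convexHull ℝ _ (mem_image_of_mem x (by simpa using hj)))))
  simp only [hQc, sub_neg, natDegree_sub_C, ContinuousLinearMap.coe_coe] at hup hlow
  have : (Q.natDegree / 2 + 1) * (r - 1) ≤ (d / 2 + 1) * (r - 1) := by gcongr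
  omega

/-- Lemma 3.2 (alternating partition lemma): if `n ≥ (d+1)(⌊d/2⌋+1)(r−1) + 1` points
lie in increasing order on the moment curve in `ℝ^d`, then the convex hulls of the
parts of the alternating partition into `r` parts have a common point. -/
theorem alternating_partition_moment_curve (d n r : ℕ) (hd : 1 ≤ d) (hr : 1 ≤ r)
    (hn : (d + 1) * (d / 2 + 1) * (r - 1) + 1 ≤ n)
    (α : Fin n → ℝ) (hα : StrictMono α) :
    (⋂ i : Fin r, convexHull ℝ
      (((Finset.univ.filter (fun j : Fin n => j.val % r = i.val)).image
        (fun j : Fin n => (fun k : Fin d => α j ^ (k.val + 1))) :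
          Finset (Fin d → ℝ)) : Set (Fin d → ℝ))).Nonempty :=
  alternating_partition_moment_curve_general d n r hn α hα
end

section
/- For all positive integers n, d, r with r ≥ 2 and n sufficiently large: rt + r(d−2)/2 ≤ N(d, t, r), where t = T(n, d, r) is the maximal tolerance achievable by n points. Equivalently, from T(n, d, r) ≤ ⌊n/r⌋ − ⌊d/2⌋ it follows that N(d, t, r) ≥ r·t + r(⌊d/2⌋ ) − (r − 1), i.e., the tolerated Tverberg number satisfies N(d, t, r) ≥ rt + Ω_d,r(1). -/
/-- The tolerated Tverberg number `N(d,t,r)`: the least `N` such that every set of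
at least `N` points in general position in `ℝ^d` admits a partition into `r` parts
tolerating `t` deletions. -/
noncomputable def toleratedTverberg (d t r : ℕ) : ℕ :=
  sInf {N : ℕ | ∀ X : Finset (Fin d → ℝ), GenPos X → N ≤ X.card → hasTol X r t}

section TTLB_aux
open Finset Polynomial

noncomputable def mcurve (d : ℕ) (x : ℝ) : Fin d → ℝ := fun j => x ^ ((j : ℕ) + 1)
lemma mcurve_apply_zero {d : ℕ} (hd : 1 ≤ d) (x : ℝ) : mcurve d x ⟨0, hd⟩ = x := by
  simp [mcurve]
noncomputable def momentX (d n : ℕ) : Finset (Fin d → ℝ) :=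
  (Finset.range n).image (fun k : ℕ => mcurve d (k : ℝ))
lemma momentX_rep {d n : ℕ} (hd : 1 ≤ d) {p : Fin d → ℝ} (hp : p ∈ momentX d n) :
    p = mcurve d (p ⟨0, hd⟩) := by
  obtain ⟨k, -, rfl⟩ := Finset.mem_image.mp hp
  rw [mcurve_apply_zero hd]

noncomputable def affFun {d : ℕ} (c₀ : ℝ) (c : Fin d → ℝ) : (Fin d → ℝ) →ᵃ[ℝ] ℝ where
  toFun y := c₀ + ∑ j, c j * y j
  linear :=
    { toFun := fun y => ∑ j, c j * y j
      map_add' := by intro a b; simp [mul_add, Finset.sum_add_distrib]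
      map_smul' := by
        intro m a
        simp only [Pi.smul_apply, smul_eq_mul, RingHom.id_apply, Finset.mul_sum]
        exact Finset.sum_congr rfl fun j _ => by ring }
  map_vadd' := by
    intro p v
    simp only [vadd_eq_add, Pi.add_apply, LinearMap.coe_mk, AddHom.coe_mk]
    simp only [mul_add, Finset.sum_add_distrib]
    ring
lemma affFun_apply {d : ℕ} (c₀ : ℝ) (c : Fin d → ℝ) (y : Fin d → ℝ) :
    affFun c₀ c y = c₀ + ∑ j, c j * y j := rfl

lemma affFun_hull_zero {d : ℕ} (φ : (Fin d → ℝ) →ᵃ[ℝ] ℝ) {B : Finset (Fin d → ℝ)}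
    (h : ∀ y ∈ B, φ y = 0) {x : Fin d → ℝ} (hx : x ∈ convexHull ℝ (B : Set (Fin d → ℝ))) :
    φ x = 0 := by
  have h1 : φ x ∈ φ '' (convexHull ℝ (B : Set (Fin d → ℝ))) := Set.mem_image_of_mem _ hx
  rw [AffineMap.image_convexHull] at h1
  have h2 : φ '' (B : Set (Fin d → ℝ)) ⊆ {0} := by
    rintro - ⟨y, hy, rfl⟩; exact h y hy
  have := convexHull_min h2 (convex_singleton 0) h1
  simpa using this

lemma affFun_hull_pos {d : ℕ} (φ : (Fin d → ℝ) →ᵃ[ℝ] ℝ) {B : Finset (Fin d → ℝ)}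
    (h : ∀ y ∈ B, 0 < φ y) {x : Fin d → ℝ} (hx : x ∈ convexHull ℝ (B : Set (Fin d → ℝ))) :
    0 < φ x := by
  have h1 : φ x ∈ φ '' (convexHull ℝ (B : Set (Fin d → ℝ))) := Set.mem_image_of_mem _ hx
  rw [AffineMap.image_convexHull] at h1
  have h2 : φ '' (B : Set (Fin d → ℝ)) ⊆ Set.Ioi 0 := by
    rintro - ⟨y, hy, rfl⟩; exact h y hy
  exact convexHull_min h2 (convex_Ioi 0) h1

/-- faces of the cyclic polytope: a set of at most `⌊d/2⌋` moment-curve points has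
convex hull disjoint from the hull of any disjoint set of moment-curve points. -/
lemma moment_sep {d n : ℕ} (hd : 1 ≤ d) {R B : Finset (Fin d → ℝ)}
    (hR : R ⊆ momentX d n) (hB : B ⊆ momentX d n) (hdisj : Disjoint R B)
    (hcard : R.card ≤ d / 2) {x : Fin d → ℝ}
    (hxR : x ∈ convexHull ℝ (R : Set (Fin d → ℝ)))
    (hxB : x ∈ convexHull ℝ (B : Set (Fin d → ℝ))) : False := by
  classical
  set q : ℝ[X] := ∏ y ∈ R, (X - C (y ⟨0, hd⟩)) ^ 2 with hq
  have hqdeg : q.natDegree ≤ d := by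
    have h1 : q.natDegree = ∑ y ∈ R, ((X - C (y ⟨0, hd⟩)) ^ 2 : ℝ[X]).natDegree := by
      rw [hq]
      exact natDegree_prod _ _ (fun y _ => pow_ne_zero _ (X_sub_C_ne_zero _))
    have h2 : ∀ y ∈ R, ((X - C (y ⟨0, hd⟩)) ^ 2 : ℝ[X]).natDegree = 2 := by
      intro y _
      rw [natDegree_pow, natDegree_X_sub_C]
    calc q.natDegree = ∑ _y ∈ R, 2 := h1.trans (Finset.sum_congr rfl h2)
      _ = R.card * 2 := by rw [Finset.sum_const, smul_eq_mul]
      _ ≤ d := le_trans (Nat.mul_le_mul_right 2 hcard) (Nat.div_mul_le_self d 2)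
  set φ := affFun (q.coeff 0) (fun j : Fin d => q.coeff ((j : ℕ) + 1)) with hφ
  -- evaluation on moment points
  have heval : ∀ p ∈ momentX d n, φ p = q.eval (p ⟨0, hd⟩) := by
    intro p hp
    rw [eval_eq_sum_range' (Nat.lt_succ_of_le hqdeg)]
    rw [Finset.sum_range_succ']
    rw [hφ, affFun_apply]
    rw [pow_zero, mul_one, add_comm]
    congr 1
    rw [← Fin.sum_univ_eq_sum_range (fun k => q.coeff (k + 1) * (p ⟨0, hd⟩) ^ (k + 1))]
    refine Finset.sum_congr rfl fun j _ => ?_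
    congr 1
    conv_lhs => rw [momentX_rep hd hp]
    rfl
  -- injectivity of the parameter on momentX
  have hparam : ∀ p ∈ momentX d n, ∀ y ∈ momentX d n, p ⟨0, hd⟩ = y ⟨0, hd⟩ → p = y := by
    intro p hp y hy hxy
    rw [momentX_rep hd hp, momentX_rep hd hy, hxy]
  have hzero : ∀ y ∈ R, φ y = 0 := by
    intro y hy
    rw [heval y (hR hy), hq, eval_prod]
    apply Finset.prod_eq_zero hy
    simp
  have hpos : ∀ p ∈ B, 0 < φ p := by
    intro p hp
    rw [heval p (hB hp), hq, eval_prod]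
    apply Finset.prod_pos
    intro y hy
    simp only [eval_pow, eval_sub, eval_X, eval_C]
    apply sq_pos_of_ne_zero
    rw [sub_ne_zero]
    intro hcontra
    have : p = y := hparam p (hB hp) y (hR hy) hcontra
    exact (Finset.disjoint_right.mp hdisj hp) (this ▸ hy)
  have h0 := affFun_hull_zero φ hzero hxR
  have h1 := affFun_hull_pos φ hpos hxB
  rw [h0] at h1
  exact lt_irrefl 0 h1

lemma genpos_momentX (d n : ℕ) (hd : 1 ≤ d) : GenPos (momentX d n) := by
  intro s hs hcard
  rw [affineIndependent_iff_of_fintype]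
  intro w hw hvs i
  rw [Finset.univ.weightedVSub_eq_linear_combination hw] at hvs
  have e : (s : Set (Fin d → ℝ)) ≃ Fin (d + 1) := by
    exact s.equivFinOfCardEq hcard
  have hrep : ∀ q : (s : Set (Fin d → ℝ)), (q : Fin d → ℝ) = mcurve d ((q : Fin d → ℝ) ⟨0, hd⟩) :=
    fun q => momentX_rep hd (hs q.2)
  set f : Fin (d + 1) → ℝ := fun i => ((e.symm i : Fin d → ℝ)) ⟨0, hd⟩ with hf
  have hfinj : Function.Injective f := by
    intro a b hab
    apply e.symm.injective
    apply Subtype.ext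
    rw [hrep (e.symm a), hrep (e.symm b)]
    exact congrArg (mcurve d) hab
  set v : Fin (d + 1) → ℝ := fun i => w (e.symm i) with hv
  have hzero : v = 0 := by
    apply Matrix.eq_zero_of_forall_pow_sum_mul_pow_eq_zero hfinj
    intro j
    rcases j with ⟨jv, hjv⟩
    match jv, hjv with
    | 0, _ =>
      simp only [Fin.val_mk, pow_zero, mul_one, hv]
      rw [Equiv.sum_comp e.symm w]
      exact hw
    | (Nat.succ k), hk =>
      have hk' : k < d := by omega
      have := congrFun hvs ⟨k, hk'⟩
      rw [Finset.sum_apply] at this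
      have h2 : ∀ q : (s : Set (Fin d → ℝ)), (w q • (q : Fin d → ℝ)) ⟨k, hk'⟩
          = w q * ((q : Fin d → ℝ) ⟨0, hd⟩) ^ (k + 1) := by
        intro q
        rw [Pi.smul_apply, smul_eq_mul]
        congr 1
        conv_lhs => rw [hrep q]
        rfl
      rw [Finset.sum_congr rfl (fun q _ => h2 q)] at this
      rw [Pi.zero_apply] at this
      rw [← Equiv.sum_comp e.symm (fun q => w q * ((q : Fin d → ℝ) ⟨0, hd⟩) ^ (k + 1))] at this
      simpa [hv, hf] using this
  have : w i = v (e i) := by simp [hv]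
  rw [this, hzero, Pi.zero_apply]

lemma momentX_card {d n : ℕ} (hd : 1 ≤ d) : (momentX d n).card = n := by
  rw [momentX, Finset.card_image_of_injective, Finset.card_range]
  intro a b hab
  have := congrFun hab ⟨0, hd⟩
  simp [mcurve] at this
  exact_mod_cast this

lemma moment_fail {d t r n : ℕ} (hd : 1 ≤ d) (hr : 2 ≤ r) (hn : n ≤ r * (t + d / 2)) :
    ¬ hasTol (momentX d n) r t := by
  classical
  rintro ⟨A, hdisj, hcover, htol⟩
  set X := momentX d n with hX
  have hAX : ∀ i, A i ⊆ X := by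
    intro i
    rw [hcover]
    exact Finset.subset_biUnion_of_mem A (Finset.mem_univ i)
  have hsum : ∑ i : Fin r, (A i).card = n := by
    have h1 : (Finset.univ.biUnion A).card = ∑ i : Fin r, (A i).card :=
      Finset.card_biUnion (fun i _ j _ hij => hdisj i j hij)
    rw [← h1, ← hcover, hX, momentX_card hd]
  -- pigeonhole : some part is small
  have hsmall : ∃ i₀ : Fin r, (A i₀).card ≤ t + d / 2 := by
    by_contra hcon
    push_neg at hcon
    have h2 : ∀ i ∈ (Finset.univ : Finset (Fin r)), t + d / 2 + 1 ≤ (A i).card :=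
      fun i _ => hcon i
    have h3 := Finset.card_nsmul_le_sum Finset.univ (fun i => (A i).card) _ h2
    rw [hsum, Finset.card_fin, smul_eq_mul] at h3
    have : r * (t + d / 2 + 1) = r * (t + d / 2) + r := by ring
    omega
  obtain ⟨i₀, hi₀⟩ := hsmall
  -- choose the remaining face R and the deleted set Y
  obtain ⟨R, hRA, hRcard⟩ :=
    Finset.exists_subset_card_eq (min_le_left (A i₀).card (d / 2))
  set Y := A i₀ \ R with hY
  have hYX : Y ⊆ X := (Finset.sdiff_subset).trans (hAX i₀)
  have hYcard : Y.card ≤ t := by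
    have h4 : Y.card = (A i₀).card - R.card := Finset.card_sdiff_of_subset hRA
    rw [hRcard] at h4
    rcases Nat.le_total (A i₀).card (d / 2) with h | h <;>
      [rw [min_eq_left h] at h4; rw [min_eq_right h] at h4] <;> omega
  obtain ⟨x, hx⟩ := htol Y hYX hYcard
  rw [Set.mem_iInter] at hx
  -- pick another index
  haveI : Nontrivial (Fin r) := Fin.nontrivial_iff_two_le.mpr hr
  obtain ⟨i₁, hne⟩ := exists_ne i₀
  have hAi₀ : A i₀ \ Y = R := by
    rw [hY, Finset.sdiff_sdiff_self_left]
    exact Finset.inter_eq_right.mpr hRA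
  have hxR : x ∈ convexHull ℝ (R : Set (Fin d → ℝ)) := by
    have := hx i₀
    rwa [hAi₀] at this
  have hxB : x ∈ convexHull ℝ ((A i₁ \ Y : Finset (Fin d → ℝ)) : Set (Fin d → ℝ)) := hx i₁
  refine moment_sep hd (hRA.trans (hAX i₀)) ((Finset.sdiff_subset).trans (hAX i₁)) ?_ ?_ hxR hxB
  · exact Finset.disjoint_of_subset_left hRA
      (Finset.disjoint_of_subset_right Finset.sdiff_subset (hdisj i₀ i₁ hne.symm))
  · rw [hRcard]; exact min_le_right _ _

/-- A point deep enough for repeated Carathéodory extraction, via Helly. -/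
lemma exists_deep_point {d k : ℕ} (X : Finset (Fin d → ℝ)) (hX : (d + 1) * k < X.card) :
    ∃ p : Fin d → ℝ, ∀ Y : Finset (Fin d → ℝ), Y ⊆ X → Y.card ≤ k →
      p ∈ convexHull ℝ ((X \ Y : Finset (Fin d → ℝ)) : Set (Fin d → ℝ)) := by
  classical
  set F : Finset (Fin d → ℝ) → Set (Fin d → ℝ) :=
    fun Y => convexHull ℝ ((X \ Y : Finset (Fin d → ℝ)) : Set (Fin d → ℝ)) with hF
  set s : Finset (Finset (Fin d → ℝ)) := X.powerset.filter (fun Y => Y.card ≤ k) with hs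
  have hfr : Module.finrank ℝ (Fin d → ℝ) = d := Module.finrank_fin_fun ℝ
  have key : (⋂ Y ∈ s, F Y).Nonempty := by
    apply Convex.helly_theorem' (𝕜 := ℝ) (fun Y _ => convex_convexHull ℝ _)
    intro I hIs hIcard
    rw [hfr] at hIcard
    set U : Finset (Fin d → ℝ) := I.biUnion id with hU
    have hUcard : U.card ≤ (d + 1) * k := by
      calc U.card ≤ ∑ Y ∈ I, (id Y).card := Finset.card_biUnion_le
        _ ≤ I.card * k := by
            apply Finset.sum_le_card_nsmul
            intro Y hY
            have := hIs hY
            rw [hs, Finset.mem_filter] at this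
            exact this.2
        _ ≤ (d + 1) * k := Nat.mul_le_mul_right k hIcard
    have hnsub : ¬ X ⊆ U := by
      intro hsub
      have := Finset.card_le_card hsub
      omega
    obtain ⟨x, hxX, hxU⟩ := Finset.not_subset.mp hnsub
    refine ⟨x, Set.mem_iInter₂.mpr fun Y hY => ?_⟩
    apply subset_convexHull
    rw [Finset.coe_sdiff]
    exact ⟨hxX, fun hxY => hxU (Finset.mem_biUnion.mpr ⟨Y, hY, hxY⟩)⟩
  obtain ⟨p, hp⟩ := key
  rw [Set.mem_iInter₂] at hp
  refine ⟨p, fun Y hYX hYk => hp Y ?_⟩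
  rw [hs, Finset.mem_filter]
  exact ⟨Finset.mem_powerset.mpr hYX, hYk⟩

/-- Greedy extraction of disjoint small sets whose hulls all contain `p`. -/
lemma extract_simplices {d k : ℕ} (X : Finset (Fin d → ℝ)) (p : Fin d → ℝ)
    (hp : ∀ Y : Finset (Fin d → ℝ), Y ⊆ X → Y.card ≤ k →
      p ∈ convexHull ℝ ((X \ Y : Finset (Fin d → ℝ)) : Set (Fin d → ℝ))) :
    ∀ m, m * (d + 1) ≤ k → ∃ T : Fin m → Finset (Fin d → ℝ),
      (∀ j, T j ⊆ X) ∧ (∀ j, (T j).card ≤ d + 1) ∧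
      (∀ j, p ∈ convexHull ℝ ((T j : Set (Fin d → ℝ)))) ∧
      (∀ j j', j ≠ j' → Disjoint (T j) (T j')) := by
  classical
  intro m
  induction m with
  | zero => exact fun _ => ⟨fun _ => ∅, fun j => j.elim0, fun j => j.elim0,
      fun j => j.elim0, fun j => j.elim0⟩
  | succ m ih =>
    intro hm
    obtain ⟨T, hTX, hTc, hTp, hTd⟩ := ih (le_trans (by nlinarith) hm)
    set U : Finset (Fin d → ℝ) := Finset.univ.biUnion T with hU
    have hUX : U ⊆ X := Finset.biUnion_subset.mpr fun j _ => hTX j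
    have hUcard : U.card ≤ k := by
      calc U.card ≤ ∑ j : Fin m, (T j).card := Finset.card_biUnion_le
        _ ≤ m * (d + 1) := by
            have h := Finset.sum_le_card_nsmul Finset.univ (fun j => (T j).card) (d + 1)
              (fun j _ => hTc j)
            rwa [Finset.card_fin, smul_eq_mul] at h
        _ ≤ k := le_trans (by nlinarith) hm
    have hpU := hp U hUX hUcard
    rw [convexHull_eq_union] at hpU
    simp only [Set.mem_iUnion, exists_prop] at hpU
    obtain ⟨t0, ht0sub, ht0ai, ht0p⟩ := hpU
    have ht0X : t0 ⊆ X \ U := Finset.coe_subset.mp (by exact_mod_cast ht0sub)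
    have ht0card : t0.card ≤ d + 1 := by
      have h1 := ht0ai.card_le_finrank_succ
      rw [Fintype.card_coe] at h1
      refine h1.trans (Nat.succ_le_succ ?_)
      exact le_trans (Submodule.finrank_le _) (le_of_eq (Module.finrank_fin_fun ℝ))
    refine ⟨Fin.cons t0 T, ?_, ?_, ?_, ?_⟩
    · intro j
      refine Fin.cases ?_ ?_ j
      · exact ht0X.trans Finset.sdiff_subset
      · exact fun i => hTX i
    · intro j
      refine Fin.cases ?_ ?_ j
      · exact ht0card
      · exact fun i => hTc i
    · intro j
      refine Fin.cases ?_ ?_ j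
      · exact ht0p
      · exact fun i => hTp i
    · have hd0 : ∀ i : Fin m, Disjoint t0 (T i) := by
        intro i
        apply Finset.disjoint_of_subset_left ht0X
        apply Finset.disjoint_of_subset_right
          (Finset.subset_biUnion_of_mem T (Finset.mem_univ i))
        exact Finset.sdiff_disjoint
      intro j j'
      refine Fin.cases ?_ ?_ j
      · refine Fin.cases ?_ ?_ j'
        · intro h; exact absurd rfl h
        · intro i _
          simp only [Fin.cons_zero, Fin.cons_succ]
          exact hd0 i
      · intro a
        refine Fin.cases ?_ ?_ j'
        · intro _
          simp only [Fin.cons_zero, Fin.cons_succ]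
          exact (hd0 a).symm
        · intro b hab
          simp only [Fin.cons_succ]
          exact hTd a b (fun h => hab (congrArg Fin.succ h))

lemma hasTol_of_large {d t r : ℕ} (hr : 1 ≤ r) (X : Finset (Fin d → ℝ))
    (hX : (d + 1) * (r * (t + 1) * (d + 1)) < X.card) : hasTol X r t := by
  classical
  obtain ⟨p, hp⟩ := exists_deep_point X hX
  obtain ⟨T, hTX, hTc, hTp, hTd⟩ := extract_simplices X p hp (r * (t + 1)) (le_refl _)
  set e := (finProdFinEquiv : Fin r × Fin (t + 1) ≃ Fin (r * (t + 1))) with he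
  set S : Fin r → Fin (t + 1) → Finset (Fin d → ℝ) := fun i l => T (e (i, l)) with hS
  set i0 : Fin r := ⟨0, hr⟩ with hi0
  set L : Finset (Fin d → ℝ) := X \ Finset.univ.biUnion T with hL
  set A : Fin r → Finset (Fin d → ℝ) :=
    fun i => Finset.univ.biUnion (S i) ∪ (if i = i0 then L else ∅) with hA
  have hSX : ∀ i l, S i l ⊆ X := fun i l => hTX _
  have hSA : ∀ i l, S i l ⊆ A i := by
    intro i l
    exact (Finset.subset_biUnion_of_mem (S i) (Finset.mem_univ l)).trans
      Finset.subset_union_left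
  have hSdisj : ∀ i l i' l', (i, l) ≠ (i', l') → Disjoint (S i l) (S i' l') := by
    intro i l i' l' h
    exact hTd _ _ (fun hh => h (e.injective hh))
  have hBB : ∀ i j, i ≠ j →
      Disjoint (Finset.univ.biUnion (S i)) (Finset.univ.biUnion (S j)) := by
    intro i j hij
    rw [Finset.disjoint_biUnion_left]
    intro l _
    rw [Finset.disjoint_biUnion_right]
    intro l' _
    exact hSdisj i l j l' (fun h => hij (congrArg Prod.fst h))
  have hLB : ∀ i l, Disjoint L (S i l) := by
    intro i l
    refine Finset.disjoint_of_subset_right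
      (Finset.subset_biUnion_of_mem T (Finset.mem_univ (e (i, l)))) ?_
    exact Finset.sdiff_disjoint
  have hAX : ∀ i, A i ⊆ X := by
    intro i
    rw [hA]
    simp only
    refine Finset.union_subset (Finset.biUnion_subset.mpr fun l _ => hSX i l) ?_
    split_ifs
    · exact Finset.sdiff_subset
    · exact Finset.empty_subset _
  refine ⟨A, ?_, ?_, ?_⟩
  · intro i j hij
    rw [hA]
    simp only
    refine Finset.disjoint_union_left.mpr ⟨Finset.disjoint_union_right.mpr ⟨hBB i j hij, ?_⟩,
      Finset.disjoint_union_right.mpr ⟨?_, ?_⟩⟩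
    · split_ifs
      · exact (Finset.disjoint_biUnion_left _ _ _).mpr fun l _ => (hLB i l).symm
      · exact Finset.disjoint_empty_right _
    · split_ifs
      · exact (Finset.disjoint_biUnion_right _ _ _).mpr fun l _ => hLB j l
      · exact Finset.disjoint_empty_left _
    · split_ifs with h1 h2
      · exact absurd (h1.trans h2.symm) hij
      · exact Finset.disjoint_empty_right _
      · exact Finset.disjoint_empty_left _
      · exact Finset.disjoint_empty_left _
  · apply Finset.Subset.antisymm
    · intro x hx
      by_cases hxT : x ∈ Finset.univ.biUnion T
      · obtain ⟨j0, -, hj0⟩ := Finset.mem_biUnion.mp hxT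
        obtain ⟨⟨i, l⟩, hil⟩ := e.surjective j0
        refine Finset.mem_biUnion.mpr ⟨i, Finset.mem_univ i, hSA i l ?_⟩
        show x ∈ T (e (i, l))
        rw [hil]
        exact hj0
      · refine Finset.mem_biUnion.mpr ⟨i0, Finset.mem_univ i0, ?_⟩
        refine Finset.mem_union_right _ ?_
        rw [if_pos rfl]
        exact Finset.mem_sdiff.mpr ⟨hx, hxT⟩
    · exact Finset.biUnion_subset.mpr fun i _ => hAX i
  · intro Y hYX hYc
    refine ⟨p, Set.mem_iInter.mpr fun i => ?_⟩
    have hl : ∃ l : Fin (t + 1), Disjoint (S i l) Y := by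
      by_contra hcon
      push_neg at hcon
      have hch : ∀ l : Fin (t + 1), ∃ y, y ∈ S i l ∧ y ∈ Y :=
        fun l => Finset.not_disjoint_iff.mp (hcon l)
      choose g hg1 hg2 using hch
      have hinj : Set.InjOn g (Finset.univ : Finset (Fin (t + 1))) := by
        intro l _ l' _ hll'
        by_contra hne
        exact Finset.disjoint_left.mp
          (hSdisj i l i l' (fun h => hne (congrArg Prod.snd h))) (hg1 l) (hll' ▸ hg1 l')
      have hcard := Finset.card_le_card_of_injOn g (fun l _ => hg2 l) hinj
      rw [Finset.card_fin] at hcard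
      omega
    obtain ⟨l, hldisj⟩ := hl
    have hsub : S i l ⊆ A i \ Y := Finset.subset_sdiff.mpr ⟨hSA i l, hldisj⟩
    exact convexHull_mono (Finset.coe_subset.mpr hsub) (hTp _)

end TTLB_aux

/-- Lower bound for the tolerated Tverberg number:
`N(d,t,r) ≥ rt + r⌊d/2⌋ − (r − 1)`. -/
theorem tolerated_tverberg_lower_bound (d t r : ℕ) (hd : 1 ≤ d) (hr : 2 ≤ r) :
    r * t + r * (d / 2) - (r - 1) ≤ toleratedTverberg d t r := by
  have hne : {N : ℕ | ∀ X : Finset (Fin d → ℝ), GenPos X → N ≤ X.card → hasTol X r t}.Nonempty := by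
    refine ⟨(d + 1) * (r * (t + 1) * (d + 1)) + 1, fun X _ hcard => ?_⟩
    exact hasTol_of_large (by omega) X (by omega)
  rw [toleratedTverberg]
  apply le_csInf hne
  intro b hb
  by_contra hcon
  push_neg at hcon
  have hmul : r * (t + d / 2) = r * t + r * (d / 2) := by ring
  set n := r * t + r * (d / 2) - (r - 1) - 1 with hn
  have h1 : n ≤ r * (t + d / 2) := by omega
  have hfail := moment_fail (d := d) (t := t) (r := r) (n := n) hd hr h1
  have hgp := genpos_momentX d n hd
  have hc : b ≤ (momentX d n).card := by rw [momentX_card hd]; omega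
  exact hfail (hb (momentX d n) hgp hc)
end
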